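/- arXiv:2302.07993 — 8 statements merged into one kernel-verified Lean document; each statement's English description precedes it below -/
import Mathlib

section
/- Suppose ℓ, r : [0,∞) → ℝ satisfy dℓ/dt = (α/2) f((ℓ+r)/2) and dr/dt = −(β/2) f((ℓ+r)/2) with α, β > 0 and initial condition ℓ(0) < r(0), the solution being continued as long as ℓ(t) < r(t). Then the solutions meet in finite time: there exists T < ∞ with ℓ(T) = r(T). -/
open MeasureTheory Set Filter Topology Asymptotics

/-!
While `ℓ < r`, the left candidate moves right and the right candidate moves left, so the
midpoint `(ℓ + r) / 2` never leaves `[ℓ 0, r 0]`. On that compact interval the continuous,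
positive density `f` is bounded below by some `c > 0`, hence the gap `r - ℓ` shrinks at rate at
least `(α + β) c / 2` and would become negative in finite time. By continuity the candidates meet
before that.
-/

theorem forall_lt_of_forall_ne {u v : ℝ → ℝ} {a : ℝ} (hu : Continuous u) (hv : Continuous v)
    (ha : u a < v a) (hne : ∀ t ∈ Ici a, u t ≠ v t) : ∀ t ∈ Ici a, u t < v t := by
  intro t ht
  by_contra! hvu
  have hzero : (0 : ℝ) ∈ Icc (v t - u t) (v a - u a) := ⟨by linarith, by linarith⟩
  obtain ⟨s, hs, hs0⟩ := intermediate_value_Icc' (mem_Ici.mp ht) (hv.sub hu).continuousOn hzero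
  exact hne s hs.1 (sub_eq_zero.mp hs0).symm

section DerivativeSign

variable {g g' : ℝ → ℝ} {a : ℝ}

theorem monotoneOn_Ici_of_hasDerivAt_nonneg (hd : ∀ t ∈ Ici a, HasDerivAt g (g' t) t)
    (hg' : ∀ t ∈ Ioi a, 0 ≤ g' t) : MonotoneOn g (Ici a) :=
  monotoneOn_of_hasDerivWithinAt_nonneg (convex_Ici a)
    (fun t ht ↦ (hd t ht).continuousAt.continuousWithinAt)
    (by simpa using fun t ht ↦ (hd t (le_of_lt ht)).hasDerivWithinAt)
    (by simpa using hg')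

theorem antitoneOn_Ici_of_hasDerivAt_nonpos (hd : ∀ t ∈ Ici a, HasDerivAt g (g' t) t)
    (hg' : ∀ t ∈ Ioi a, g' t ≤ 0) : AntitoneOn g (Ici a) :=
  antitoneOn_of_hasDerivWithinAt_nonpos (convex_Ici a)
    (fun t ht ↦ (hd t ht).continuousAt.continuousWithinAt)
    (by simpa using fun t ht ↦ (hd t (le_of_lt ht)).hasDerivWithinAt)
    (by simpa using hg')

theorem le_sub_mul_of_hasDerivAt_le_neg {k : ℝ} (hd : ∀ t ∈ Ici a, HasDerivAt g (g' t) t)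
    (hg' : ∀ t ∈ Ioi a, g' t ≤ -k) : ∀ t ∈ Ici a, g t ≤ g a - k * (t - a) := by
  have hanti : AntitoneOn (fun t ↦ g t + k * t) (Ici a) :=
    antitoneOn_Ici_of_hasDerivAt_nonpos (g' := fun t ↦ g' t + k)
      (fun t ht ↦ by simpa using (hd t ht).fun_add ((hasDerivAt_id t).const_mul k))
      (fun t ht ↦ by linarith [hg' t ht])
  intro t ht
  have := hanti self_mem_Ici ht ht
  simp only at this
  linarith

end DerivativeSign

section Candidates

variable {α β : ℝ} {ℓ r m : ℝ → ℝ}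

theorem midpoint_mem_Icc_of_monotoneOn {a : ℝ} (hℓ : MonotoneOn ℓ (Ici a))
    (hr : AntitoneOn r (Ici a)) (hlt : ∀ t ∈ Ici a, ℓ t < r t) :
    ∀ t ∈ Ici a, (ℓ t + r t) / 2 ∈ Icc (ℓ a) (r a) := by
  intro t ht
  have hℓt := hℓ self_mem_Ici ht ht
  have hrt := hr self_mem_Ici ht ht
  have := hlt t ht
  constructor <;> linarith

theorem gap_le_sub_mul {c : ℝ} (hαβ : 0 ≤ α + β)
    (hℓ : ∀ t ∈ Ici (0 : ℝ), HasDerivAt ℓ (α / 2 * m t) t)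
    (hr : ∀ t ∈ Ici (0 : ℝ), HasDerivAt r (-(β / 2) * m t) t)
    (hm : ∀ t ∈ Ici (0 : ℝ), c ≤ m t) :
    ∀ t ∈ Ici (0 : ℝ), r t - ℓ t ≤ r 0 - ℓ 0 - (α + β) / 2 * c * t := by
  intro t ht
  have := le_sub_mul_of_hasDerivAt_le_neg (k := (α + β) / 2 * c)
    (fun s hs ↦ (hr s hs).sub (hℓ s hs)) (fun s hs ↦ ?_) t ht
  · simpa using this
  · have := mul_le_mul_of_nonneg_left (hm s (mem_Ici.mpr hs.le)) hαβ
    linarith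

end Candidates

theorem stmt_4_general
    (f : ℝ → ℝ)
    (hf_smooth : ContDiff ℝ 1 f)
    (hf_pos : ∀ x, 0 < f x)
    (α β : ℝ) (hα : 0 < α) (hβ : 0 < β)
    (ℓ r : ℝ → ℝ)
    (hℓcont : Continuous ℓ) (hrcont : Continuous r)
    (hinit : ℓ 0 < r 0)
    (hℓ : ∀ t ∈ Ici (0 : ℝ), ℓ t < r t →
        HasDerivAt ℓ (α / 2 * f ((ℓ t + r t) / 2)) t)
    (hr : ∀ t ∈ Ici (0 : ℝ), ℓ t < r t →
        HasDerivAt r (-(β / 2) * f ((ℓ t + r t) / 2)) t) :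
    ∃ T ∈ Ici (0 : ℝ), ℓ T = r T := by
  by_contra! hne
  have hlt := forall_lt_of_forall_ne hℓcont hrcont hinit hne
  have hℓ' t ht := hℓ t ht (hlt t ht)
  have hr' t ht := hr t ht (hlt t ht)
  have hmid := midpoint_mem_Icc_of_monotoneOn
    (monotoneOn_Ici_of_hasDerivAt_nonneg hℓ' fun t _ ↦ (mul_pos (half_pos hα) (hf_pos _)).le)
    (antitoneOn_Ici_of_hasDerivAt_nonpos hr' fun t _ ↦
      (mul_neg_of_neg_of_pos (neg_neg_of_pos (half_pos hβ)) (hf_pos _)).le) hlt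
  obtain ⟨c, hc, hfc⟩ :=
    isCompact_Icc.exists_forall_le' hf_smooth.continuous.continuousOn fun x _ ↦ hf_pos x
  set k := (α + β) / 2 * c
  have hk : 0 < k := by positivity
  have hgap := gap_le_sub_mul (by positivity) hℓ' hr' (fun t ht ↦ hfc _ (hmid t ht))
    ((r 0 - ℓ 0) / k) (div_nonneg (sub_nonneg.mpr hinit.le) hk.le)
  rw [mul_div_cancel₀ _ hk.ne'] at hgap
  linarith [hlt _ (div_nonneg (sub_nonneg.mpr hinit.le) hk.le)]

/-- Suppose ℓ, r are continuous on [0,∞), start with ℓ(0) < r(0), and satisfy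
dℓ/dt = (α/2) f((ℓ+r)/2), dr/dt = −(β/2) f((ℓ+r)/2) (α, β > 0) as long as ℓ(t) < r(t).
Then the solutions meet in finite time: ∃ T ≥ 0 with ℓ(T) = r(T). -/
theorem stmt_4
    (f : ℝ → ℝ)
    (hf_smooth : ContDiff ℝ 1 f)
    (hf_bdd : ∃ M, ∀ x, |f x| ≤ M)
    (hf'_bdd : ∃ M, ∀ x, |deriv f x| ≤ M)
    (hf_pos : ∀ x, 0 < f x)
    (hf_total : ∫ x, f x = 1)
    (hf_median : ∫ x in Iic (0 : ℝ), f x = 1 / 2)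
    (α β : ℝ) (hα : 0 < α) (hβ : 0 < β)
    (ℓ r : ℝ → ℝ)
    (hℓcont : Continuous ℓ) (hrcont : Continuous r)
    (hinit : ℓ 0 < r 0)
    (hℓ : ∀ t ∈ Ici (0 : ℝ), ℓ t < r t →
        HasDerivAt ℓ (α / 2 * f ((ℓ t + r t) / 2)) t)
    (hr : ∀ t ∈ Ici (0 : ℝ), ℓ t < r t →
        HasDerivAt r (-(β / 2) * f ((ℓ t + r t) / 2)) t) :
    ∃ T ∈ Ici (0 : ℝ), ℓ T = r T :=
  stmt_4_general f hf_smooth hf_pos α β hα hβ ℓ r hℓcont hrcont hinit hℓ hr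
end

section
/- For all real ℓ < r, the partial derivative of S_L with respect to ℓ exists and equals ∂S_L/∂ℓ(ℓ,r) = −(1/2) f((ℓ+r)/2) g((r−ℓ)/2) + ∫_{-∞}^{(ℓ+r)/2} f′(x) g(|ℓ−x|) dx. -/
open MeasureTheory Set Filter Topology Asymptotics
open scoped NNReal

/-!
Substituting `x = u + l` turns the vote share into `∫_{u ≤ (r - l)/2} f (u + l) ψ u` with
`ψ u = g0 (|u| / γ)` continuous and integrable, so `l` enters only through the shift of `f` and the
upper limit. The shift is differentiated under the integral sign, dominated by `K |ψ|` where `K`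
bounds `f'`. For the moving limit `b l`, replacing `f (u + l)` by `f (u + ℓ)` on `[b ℓ, b l]` costs
at most `K |l - ℓ| ∫_{b ℓ}^{b l} |ψ| = o(l - ℓ)`, and what remains is differentiated by the
fundamental theorem of calculus.
-/

theorem integral_Iic_comp_add_right (φ : ℝ → ℝ) (c t : ℝ) :
    ∫ u in Iic (c - t), φ (u + t) = ∫ x in Iic c, φ x := by
  rw [← preimage_add_const_Iic]
  exact (measurePreserving_add_right volume t).setIntegral_preimage_emb
    (measurableEmbedding_addRight t) φ (Iic c)

theorem MeasureTheory.IntegrableOn.comp_abs {g : ℝ → ℝ} (hg : IntegrableOn g (Ioi 0)) :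
    Integrable fun x => g |x| := by
  have hpos : IntegrableOn (fun x => g |x|) (Ioi 0) :=
    hg.congr_fun (fun x hx => by rw [abs_of_pos hx]) measurableSet_Ioi
  have hneg : IntegrableOn (fun x => g |x|) (Iic 0) := by
    have hneg_emb : MeasurableEmbedding fun x : ℝ => -x := (Homeomorph.neg ℝ).measurableEmbedding
    rw [← Measure.map_neg_eq_self (volume : Measure ℝ), hneg_emb.integrableOn_map_iff]
    simp_rw [Function.comp_def, abs_neg, neg_preimage, neg_Iic, neg_zero]
    exact (integrableOn_Ici_iff_integrableOn_Ioi).2 hpos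
  rw [← integrableOn_univ, ← Iic_union_Ioi (a := (0 : ℝ))]
  exact hneg.union hpos

section Leibniz

variable {k ψ b : ℝ → ℝ} {ℓ : ℝ}

theorem hasDerivAt_intervalIntegral_sub_comp_add {K : ℝ≥0} (hk : LipschitzWith K k)
    (hψ : Continuous ψ) (hb : ContinuousAt b ℓ) :
    HasDerivAt (fun l => ∫ u in b ℓ..b l, (k (u + l) - k (u + ℓ)) * ψ u) 0 ℓ := by
  set P : ℝ → ℝ := fun l => ∫ u in b ℓ..b l, ‖ψ u‖
  have hP : Tendsto P (𝓝 ℓ) (𝓝 0) := by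
    have hprim := intervalIntegral.continuous_primitive (μ := volume)
      (fun _ _ => hψ.norm.intervalIntegrable _ _) (b ℓ)
    have := (hprim.tendsto (b ℓ)).comp hb
    rwa [intervalIntegral.integral_same] at this
  have hbound : ∀ l, ‖∫ u in b ℓ..b l, (k (u + l) - k (u + ℓ)) * ψ u‖ ≤ K * ‖(l - ℓ) * P l‖ := by
    intro l
    have hle : ∀ u, ‖(k (u + l) - k (u + ℓ)) * ψ u‖ ≤ K * ‖l - ℓ‖ * ‖ψ u‖ := fun u => by
      have := hk.dist_le_mul (u + l) (u + ℓ)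
      rw [dist_eq_norm, dist_eq_norm, add_sub_add_left_eq_sub] at this
      rw [norm_mul]
      exact mul_le_mul_of_nonneg_right this (norm_nonneg _)
    calc _ ≤ ‖∫ u in b ℓ..b l, K * ‖l - ℓ‖ * ‖ψ u‖‖ :=
          intervalIntegral.norm_integral_le_abs_of_norm_le (ae_of_all _ fun u => hle u)
            ((continuous_const.mul hψ.norm).intervalIntegrable _ _)
      _ = K * ‖(l - ℓ) * P l‖ := by
          rw [intervalIntegral.integral_const_mul]
          simp only [P, norm_mul, norm_norm, NNReal.norm_eq, mul_assoc]
  have hlittle : (fun l => (l - ℓ) * P l) =o[𝓝 ℓ] fun l => l - ℓ := by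
    simpa using (isBigO_refl (fun l => l - ℓ) (𝓝 ℓ)).mul_isLittleO ((isLittleO_one_iff ℝ).2 hP)
  rw [hasDerivAt_iff_isLittleO]
  simp only [intervalIntegral.integral_same, sub_zero, smul_zero]
  exact (IsBigO.of_bound K (Eventually.of_forall hbound)).trans_isLittleO hlittle

theorem hasDerivAt_intervalIntegral_comp_add_mul {K : ℝ≥0} {b' : ℝ} (hk : LipschitzWith K k)
    (hψ : Continuous ψ) (hb : HasDerivAt b b' ℓ) :
    HasDerivAt (fun l => ∫ u in b ℓ..b l, k (u + l) * ψ u) (k (b ℓ + ℓ) * ψ (b ℓ) * b') ℓ := by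
  have hkc := hk.continuous
  have hsplit : (fun l => ∫ u in b ℓ..b l, k (u + l) * ψ u) = fun l =>
      (∫ u in b ℓ..b l, k (u + ℓ) * ψ u) + ∫ u in b ℓ..b l, (k (u + l) - k (u + ℓ)) * ψ u := by
    funext l
    rw [← intervalIntegral.integral_add
      ((by fun_prop : Continuous fun u => k (u + ℓ) * ψ u).intervalIntegrable _ _)
      ((by fun_prop : Continuous fun u => (k (u + l) - k (u + ℓ)) * ψ u).intervalIntegrable _ _)]
    exact intervalIntegral.integral_congr fun u _ => by ring
  rw [hsplit, ← add_zero (k (b ℓ + ℓ) * ψ (b ℓ) * b')]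
  exact (((by fun_prop : Continuous fun u => k (u + ℓ) * ψ u).integral_hasStrictDerivAt
    (b ℓ) (b ℓ)).hasDerivAt.comp ℓ hb).add
    (hasDerivAt_intervalIntegral_sub_comp_add hk hψ hb.continuousAt)

theorem hasDerivAt_integral_comp_add_mul {μ : Measure ℝ} {K : ℝ} (hk : Differentiable ℝ k)
    (hk' : ∀ x, |deriv k x| ≤ K) (hψ : Integrable ψ μ)
    (hkψ : Integrable (fun u => k (u + ℓ) * ψ u) μ) :
    HasDerivAt (fun l => ∫ u, k (u + l) * ψ u ∂μ) (∫ u, deriv k (u + ℓ) * ψ u ∂μ) ℓ := by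
  refine (hasDerivAt_integral_of_dominated_loc_of_deriv_le (F := fun l u => k (u + l) * ψ u)
    (F' := fun l u => deriv k (u + l) * ψ u) (bound := fun u => K * ‖ψ u‖) univ_mem
    (Eventually.of_forall fun l => ?_) hkψ ?_ (ae_of_all _ fun u l _ => ?_) (hψ.norm.const_mul K)
    (ae_of_all _ fun u l _ => ?_)).2
  · exact (hk.continuous.comp (continuous_add_const l)).aestronglyMeasurable.mul
      hψ.aestronglyMeasurable
  · exact ((measurable_deriv k).comp (measurable_add_const ℓ)).aestronglyMeasurable.mul
      hψ.aestronglyMeasurable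
  · rw [norm_mul, Real.norm_eq_abs]
    exact mul_le_mul_of_nonneg_right (hk' _) (norm_nonneg _)
  · exact ((hk (u + l)).hasDerivAt.comp_const_add u l).mul_const (ψ u)

theorem hasDerivAt_integral_Iic_comp_add_mul {M K b' : ℝ} (hk : Differentiable ℝ k)
    (hk_bdd : ∀ x, |k x| ≤ M) (hk' : ∀ x, |deriv k x| ≤ K) (hψ : Integrable ψ)
    (hψ_cont : Continuous ψ) (hb : HasDerivAt b b' ℓ) :
    HasDerivAt (fun l => ∫ u in Iic (b l), k (u + l) * ψ u)
      ((∫ u in Iic (b ℓ), deriv k (u + ℓ) * ψ u) + k (b ℓ + ℓ) * ψ (b ℓ) * b') ℓ := by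
  have hint : ∀ l, Integrable fun u => k (u + l) * ψ u := fun l =>
    hψ.bdd_mul (hk.continuous.comp (continuous_add_const l)).aestronglyMeasurable
      (ae_of_all _ fun u => hk_bdd _)
  have hlip : LipschitzWith K.toNNReal k := lipschitzWith_of_nnnorm_deriv_le hk fun x => by
    rw [← NNReal.coe_le_coe, coe_nnnorm, Real.coe_toNNReal']
    exact (hk' x).trans (le_max_left _ _)
  have hsplit : (fun l => ∫ u in Iic (b l), k (u + l) * ψ u) = fun l =>
      (∫ u in Iic (b ℓ), k (u + l) * ψ u) + ∫ u in b ℓ..b l, k (u + l) * ψ u := by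
    funext l
    rw [← intervalIntegral.integral_Iic_sub_Iic (hint l).integrableOn (hint l).integrableOn]
    ring
  rw [hsplit]
  exact (hasDerivAt_integral_comp_add_mul hk hk' hψ.restrict (hint ℓ).restrict).add
    (hasDerivAt_intervalIntegral_comp_add_mul hlip hψ_cont hb)

end Leibniz

theorem stmt_5_general
    (f : ℝ → ℝ)
    (hf_smooth : ContDiff ℝ 1 f)
    (hf_bdd : ∃ M, ∀ x, |f x| ≤ M)
    (hf'_bdd : ∃ M, ∀ x, |deriv f x| ≤ M)
    (g0 : ℝ → ℝ)
    (hg0_cont : ContinuousOn g0 (Ici 0))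
    (hg0_int : ∫ z in Ioi (0 : ℝ), g0 z = 1)
    (γ : ℝ) (hγ : 0 < γ)
    (ℓ r : ℝ) (hℓr : ℓ < r) :
    HasDerivAt (fun l => ∫ x in Iic ((l + r) / 2), f x * g0 (|l - x| / γ))
      (-(1 / 2) * f ((ℓ + r) / 2) * g0 ((r - ℓ) / 2 / γ)
        + ∫ x in Iic ((ℓ + r) / 2), deriv f x * g0 (|ℓ - x| / γ)) ℓ := by
  obtain ⟨M, hM⟩ := hf_bdd
  obtain ⟨K, hK⟩ := hf'_bdd
  set ψ : ℝ → ℝ := fun u => g0 (|u| / γ)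
  have hψ_cont : Continuous ψ :=
    hg0_cont.comp_continuous (by fun_prop) fun u => div_nonneg (abs_nonneg u) hγ.le
  have hψ : Integrable ψ := by
    have hg0 : IntegrableOn g0 (Ioi 0) := .of_integral_ne_zero (by rw [hg0_int]; exact one_ne_zero)
    simpa [ψ, abs_div, abs_of_pos hγ] using hg0.comp_abs.comp_div hγ.ne'
  have hb : HasDerivAt (fun l => (r - l) / 2) (-(1 / 2)) ℓ := by
    simpa [neg_div] using ((hasDerivAt_id ℓ).const_sub r).div_const 2
  have hsubst : ∀ (φ : ℝ → ℝ) (l : ℝ), ∫ x in Iic ((l + r) / 2), φ x * g0 (|l - x| / γ) =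
      ∫ u in Iic ((r - l) / 2), φ (u + l) * ψ u := fun φ l => by
    rw [← integral_Iic_comp_add_right, show (l + r) / 2 - l = (r - l) / 2 by ring]
    refine setIntegral_congr_fun measurableSet_Iic fun u _ => ?_
    rw [show l - (u + l) = -u by ring, abs_neg]
  simp only [hsubst]
  convert hasDerivAt_integral_Iic_comp_add_mul (hf_smooth.differentiable one_ne_zero) hM hK hψ
    hψ_cont hb using 1
  have hψ_mid : ψ ((r - ℓ) / 2) = g0 ((r - ℓ) / 2 / γ) := by
    simp only [ψ, abs_of_pos (by linarith : 0 < (r - ℓ) / 2)]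
  rw [show (r - ℓ) / 2 + ℓ = (ℓ + r) / 2 by ring, hψ_mid]
  ring

/-- With abstentions modeled by `g(z) = g0(z/γ)`, the left candidate's vote share
`S_L(ℓ,r) = ∫_{-∞}^{(ℓ+r)/2} f(x) g(|ℓ−x|) dx` is differentiable in ℓ for ℓ < r, with
`∂S_L/∂ℓ(ℓ,r) = −(1/2) f((ℓ+r)/2) g((r−ℓ)/2) + ∫_{-∞}^{(ℓ+r)/2} f′(x) g(|ℓ−x|) dx`. -/
theorem stmt_5
    (f : ℝ → ℝ)
    (hf_smooth : ContDiff ℝ 1 f)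
    (hf_bdd : ∃ M, ∀ x, |f x| ≤ M)
    (hf'_bdd : ∃ M, ∀ x, |deriv f x| ≤ M)
    (hf_pos : ∀ x, 0 < f x)
    (hf_total : ∫ x, f x = 1)
    (hf_median : ∫ x in Iic (0 : ℝ), f x = 1 / 2)
    (g0 : ℝ → ℝ)
    (hg0_cont : ContinuousOn g0 (Ici 0))
    (hg0_pos : ∀ z ∈ Ici (0 : ℝ), 0 < g0 z)
    (hg0_le_one : ∀ z ∈ Ici (0 : ℝ), g0 z ≤ 1)
    (hg0_anti : AntitoneOn g0 (Ici 0))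
    (hg0_zero : g0 0 = 1)
    (hg0_decay : g0 =O[atTop] fun z => 1 / z ^ 2)
    (hg0_int : ∫ z in Ioi (0 : ℝ), g0 z = 1)
    (γ : ℝ) (hγ : 0 < γ)
    (ℓ r : ℝ) (hℓr : ℓ < r) :
    HasDerivAt (fun l => ∫ x in Iic ((l + r) / 2), f x * g0 (|l - x| / γ))
      (-(1 / 2) * f ((ℓ + r) / 2) * g0 ((r - ℓ) / 2 / γ)
        + ∫ x in Iic ((ℓ + r) / 2), deriv f x * g0 (|ℓ - x| / γ)) ℓ :=
  stmt_5_general f hf_smooth hf_bdd hf'_bdd g0 hg0_cont hg0_int γ hγ ℓ r hℓr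
end

section
/- For all real ℓ < r, ∂S_L/∂ℓ(ℓ,r) = −(1/2) f((ℓ+r)/2) g_0((r−ℓ)/(2γ)) + γ ∫_{−(r−ℓ)/(2γ)}^{∞} f′(ℓ − γu) g_0(|u|) du. -/
open MeasureTheory Set Filter Topology Asymptotics

/-!
Substituting `x = l - γ u` and writing `b l = (l - r) / (2γ)`, the vote share becomes
`γ (∫_{u > b ℓ} f (l - γu) g0 |u| du - ∫_{b ℓ}^{b l} f (l - γu) g0 |u| du)`, so the dependence
on `l` leaves `g0`, which is only continuous. The first term is differentiated under the integral
sign (`f'` is bounded and `g0 ∘ |·|` integrable); the second has a moving endpoint and, by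
continuity of its integrand at `(ℓ, b ℓ)`, contributes `b' ℓ · f ((ℓ + r) / 2) g0 |b ℓ|`.
-/

lemma integrable_comp_abs_of_integral_Ioi_ne_zero {g : ℝ → ℝ}
    (hg : ∫ z in Ioi (0 : ℝ), g z ≠ 0) : Integrable fun u => g |u| := by
  by_contra h
  have hsym := integral_comp_abs (f := g)
  rw [integral_undef h] at hsym
  exact hg (by linarith)

lemma integral_Iic_sub_mul_eq {E : Type*} [NormedAddCommGroup E] [NormedSpace ℝ E]
    (G : ℝ → E) {γ : ℝ} (hγ : 0 < γ) (l a : ℝ) :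
    ∫ x in Iic (l - γ * a), G x = γ • ∫ u in Ioi a, G (l - γ * u) := by
  have himage : (fun u => l - γ * u) '' Ioi a = Iio (l - γ * a) := by
    ext x
    constructor
    · rintro ⟨u, hu, rfl⟩
      exact sub_lt_sub_left (mul_lt_mul_of_pos_left hu hγ) l
    · intro hx
      refine ⟨(l - x) / γ, ?_, by field_simp; ring⟩
      rw [mem_Ioi, lt_div_iff₀ hγ]
      linarith [mem_Iio.1 hx]
  have hderiv : ∀ u ∈ Ioi a, HasDerivWithinAt (fun u => l - γ * u) (-γ) (Ioi a) u :=
    fun u _ => by simpa using ((hasDerivAt_id u).const_mul γ).const_sub l |>.hasDerivWithinAt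
  have hinj : InjOn (fun u => l - γ * u) (Ioi a) :=
    fun u _ v _ h => mul_left_cancel₀ hγ.ne' (sub_right_injective h)
  rw [integral_Iic_eq_integral_Iio, ← himage,
    integral_image_eq_integral_abs_deriv_smul measurableSet_Ioi hderiv hinj, abs_neg,
    abs_of_pos hγ, integral_smul]

lemma isLittleO_intervalIntegral_sub_of_continuousAt {E : Type*} [NormedAddCommGroup E]
    [NormedSpace ℝ E] {F : ℝ → ℝ → E} {b : ℝ → ℝ} {b' x₀ : ℝ}
    (hF : ContinuousAt (Function.uncurry F) (x₀, b x₀)) (hb : HasDerivAt b b' x₀) :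
    (fun l => ∫ u in b x₀..b l, (F l u - F x₀ (b x₀))) =o[𝓝 x₀] fun l => l - x₀ := by
  rw [isLittleO_iff]
  intro ε hε
  obtain ⟨K, hK, hbK⟩ := hb.isBigO_sub.exists_pos
  have hnear : ∀ᶠ p in 𝓝 (x₀, b x₀), ‖F p.1 p.2 - F x₀ (b x₀)‖ ≤ ε / K := by
    filter_upwards [hF (Metric.closedBall_mem_nhds _ (div_pos hε hK))] with p hp
    rwa [mem_preimage, mem_closedBall_iff_norm] at hp
  obtain ⟨δ, hδ, hδnear⟩ := Metric.eventually_nhds_iff.1 hnear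
  filter_upwards [hbK.bound, hb.continuousAt (Metric.ball_mem_nhds _ hδ),
    Metric.ball_mem_nhds x₀ hδ] with l hlK hlb hlx
  have hbound : ∀ u ∈ uIoc (b x₀) (b l), ‖F l u - F x₀ (b x₀)‖ ≤ ε / K := by
    intro u hu
    refine hδnear (y := (l, u)) ?_
    rw [Prod.dist_eq]
    exact max_lt hlx (lt_of_le_of_lt (abs_sub_left_of_mem_uIcc (uIoc_subset_uIcc hu)) hlb)
  calc ‖∫ u in b x₀..b l, (F l u - F x₀ (b x₀))‖
      ≤ ε / K * |b l - b x₀| := intervalIntegral.norm_integral_le_of_norm_le_const hbound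
    _ ≤ ε / K * (K * ‖l - x₀‖) := by gcongr; exact hlK
    _ = ε * ‖l - x₀‖ := by field_simp

lemma hasDerivAt_intervalIntegral_of_continuousAt {E : Type*} [NormedAddCommGroup E]
    [NormedSpace ℝ E] [CompleteSpace E] {F : ℝ → ℝ → E} {b : ℝ → ℝ} {b' x₀ : ℝ}
    (hF : ContinuousAt (Function.uncurry F) (x₀, b x₀))
    (hFi : ∀ᶠ l in 𝓝 x₀, IntervalIntegrable (F l) volume (b x₀) (b l))
    (hb : HasDerivAt b b' x₀) :
    HasDerivAt (fun l => ∫ u in b x₀..b l, F l u) (b' • F x₀ (b x₀)) x₀ := by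
  have hrem : HasDerivAt (fun l => ∫ u in b x₀..b l, (F l u - F x₀ (b x₀))) 0 x₀ := by
    rw [hasDerivAt_iff_isLittleO]
    simpa using isLittleO_intervalIntegral_sub_of_continuousAt hF hb
  have hsplit : (fun l => (b l - b x₀) • F x₀ (b x₀) + ∫ u in b x₀..b l, (F l u - F x₀ (b x₀)))
      =ᶠ[𝓝 x₀] fun l => ∫ u in b x₀..b l, F l u := by
    filter_upwards [hFi] with l hl
    rw [intervalIntegral.integral_sub hl intervalIntegrable_const,
      intervalIntegral.integral_const, add_sub_cancel]
  simpa using (((hb.sub_const (b x₀)).smul_const (F x₀ (b x₀))).add hrem).congr_of_eventuallyEq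
    hsplit.symm

lemma hasDerivAt_integral_comp_sub_mul_mul {f w : ℝ → ℝ} {μ : Measure ℝ} {C γ x₀ : ℝ}
    (hf : Differentiable ℝ f) (hf' : ∀ x, |deriv f x| ≤ C) (hw : Integrable w μ)
    (hfw : Integrable (fun u => f (x₀ - γ * u) * w u) μ) :
    HasDerivAt (fun l => ∫ u, f (l - γ * u) * w u ∂μ)
      (∫ u, deriv f (x₀ - γ * u) * w u ∂μ) x₀ := by
  refine (hasDerivAt_integral_of_dominated_loc_of_deriv_le (F := fun l u => f (l - γ * u) * w u)
    (F' := fun l u => deriv f (l - γ * u) * w u) (bound := fun u => C * |w u|)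
    univ_mem (Eventually.of_forall fun l => ?_) hfw ?_ (ae_of_all _ fun u l _ => ?_)
    (hw.abs.const_mul C) (ae_of_all _ fun u l _ => ?_)).2
  · exact (hf.continuous.comp (by fun_prop)).aestronglyMeasurable.mul hw.1
  · exact ((measurable_deriv f).comp (by fun_prop)).aestronglyMeasurable.mul hw.1
  · rw [norm_mul, Real.norm_eq_abs, Real.norm_eq_abs]
    exact mul_le_mul_of_nonneg_right (hf' _) (abs_nonneg _)
  · simpa using ((hf _).hasDerivAt.comp l ((hasDerivAt_id l).sub_const (γ * u))).mul_const (w u)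

lemma integral_Iic_midpoint_eq {f g0 : ℝ → ℝ} {γ : ℝ} (hγ : 0 < γ) (r c l : ℝ)
    (hint : Integrable fun u => f (l - γ * u) * g0 |u|) :
    ∫ x in Iic ((l + r) / 2), f x * g0 (|l - x| / γ) =
      γ * ((∫ u in Ioi c, f (l - γ * u) * g0 |u|)
        - ∫ u in c..(l - r) / (2 * γ), f (l - γ * u) * g0 |u|) := by
  have hmid : (l + r) / 2 = l - γ * ((l - r) / (2 * γ)) := by field_simp; ring
  have hscale : ∀ u, |l - (l - γ * u)| / γ = |u| := fun u => by
    rw [sub_sub_cancel, abs_mul, abs_of_pos hγ, mul_div_cancel_left₀ _ hγ.ne']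
  rw [hmid, integral_Iic_sub_mul_eq _ hγ, smul_eq_mul,
    ← intervalIntegral.integral_Ioi_sub_Ioi' hint.integrableOn hint.integrableOn, sub_sub_cancel]
  simp_rw [hscale]

theorem stmt_6_general
    (f : ℝ → ℝ)
    (hf_smooth : ContDiff ℝ 1 f)
    (hf_bdd : ∃ M, ∀ x, |f x| ≤ M)
    (hf'_bdd : ∃ M, ∀ x, |deriv f x| ≤ M)
    (g0 : ℝ → ℝ)
    (hg0_cont : ContinuousOn g0 (Ici 0))
    (hg0_int : ∫ z in Ioi (0 : ℝ), g0 z = 1)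
    (γ : ℝ) (hγ : 0 < γ)
    (ℓ r : ℝ) (hℓr : ℓ < r) :
    HasDerivAt (fun l => ∫ x in Iic ((l + r) / 2), f x * g0 (|l - x| / γ))
      (-(1 / 2) * f ((ℓ + r) / 2) * g0 ((r - ℓ) / (2 * γ))
        + γ * ∫ u in Ioi (-((r - ℓ) / (2 * γ))), deriv f (ℓ - γ * u) * g0 |u|) ℓ := by
  obtain ⟨M, hM⟩ := hf_bdd
  obtain ⟨M', hM'⟩ := hf'_bdd
  have hw_int : Integrable fun u => g0 |u| :=
    integrable_comp_abs_of_integral_Ioi_ne_zero (hg0_int ▸ one_ne_zero)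
  have hF_int : ∀ l, Integrable fun u => f (l - γ * u) * g0 |u| := fun l =>
    hw_int.bdd_mul (hf_smooth.continuous.comp (by fun_prop)).aestronglyMeasurable
      (ae_of_all _ fun _ => hM _)
  have hF_cont : Continuous fun p : ℝ × ℝ => f (p.1 - γ * p.2) * g0 |p.2| :=
    (hf_smooth.continuous.comp (by fun_prop)).mul
      (hg0_cont.comp_continuous (by fun_prop) fun p => abs_nonneg p.2)
  have hb : HasDerivAt (fun l => (l - r) / (2 * γ)) (1 / (2 * γ)) ℓ :=
    ((hasDerivAt_id ℓ).sub_const r).div_const _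
  have hfixed := hasDerivAt_integral_comp_sub_mul_mul
    (μ := volume.restrict (Ioi ((ℓ - r) / (2 * γ))))
    (hf_smooth.differentiable one_ne_zero) hM' hw_int.integrableOn (hF_int ℓ).integrableOn
  have hmoving := hasDerivAt_intervalIntegral_of_continuousAt
    (F := fun l u => f (l - γ * u) * g0 |u|) hF_cont.continuousAt
    (Eventually.of_forall fun l => (hF_int l).intervalIntegrable) hb
  rw [funext fun l => integral_Iic_midpoint_eq hγ r ((ℓ - r) / (2 * γ)) l (hF_int l)]
  refine ((hfixed.sub hmoving).const_mul γ).congr_deriv ?_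
  have hmid : ℓ - γ * ((ℓ - r) / (2 * γ)) = (ℓ + r) / 2 := by field_simp; ring
  have hlow : (ℓ - r) / (2 * γ) = -((r - ℓ) / (2 * γ)) := by ring
  have habs : |(ℓ - r) / (2 * γ)| = (r - ℓ) / (2 * γ) := by
    rw [hlow, abs_neg, abs_of_pos (div_pos (by linarith) (by linarith))]
  rw [smul_eq_mul, hmid, habs, hlow]
  field_simp
  ring

/-- For ℓ < r, after the substitution u = (ℓ−x)/γ,
`∂S_L/∂ℓ(ℓ,r) = −(1/2) f((ℓ+r)/2) g0((r−ℓ)/(2γ)) + γ ∫_{−(r−ℓ)/(2γ)}^{∞} f′(ℓ−γu) g0(|u|) du`. -/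
theorem stmt_6
    (f : ℝ → ℝ)
    (hf_smooth : ContDiff ℝ 1 f)
    (hf_bdd : ∃ M, ∀ x, |f x| ≤ M)
    (hf'_bdd : ∃ M, ∀ x, |deriv f x| ≤ M)
    (hf_pos : ∀ x, 0 < f x)
    (hf_total : ∫ x, f x = 1)
    (hf_median : ∫ x in Iic (0 : ℝ), f x = 1 / 2)
    (g0 : ℝ → ℝ)
    (hg0_cont : ContinuousOn g0 (Ici 0))
    (hg0_pos : ∀ z ∈ Ici (0 : ℝ), 0 < g0 z)
    (hg0_le_one : ∀ z ∈ Ici (0 : ℝ), g0 z ≤ 1)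
    (hg0_anti : AntitoneOn g0 (Ici 0))
    (hg0_zero : g0 0 = 1)
    (hg0_decay : g0 =O[atTop] fun z => 1 / z ^ 2)
    (hg0_int : ∫ z in Ioi (0 : ℝ), g0 z = 1)
    (γ : ℝ) (hγ : 0 < γ)
    (ℓ r : ℝ) (hℓr : ℓ < r) :
    HasDerivAt (fun l => ∫ x in Iic ((l + r) / 2), f x * g0 (|l - x| / γ))
      (-(1 / 2) * f ((ℓ + r) / 2) * g0 ((r - ℓ) / (2 * γ))
        + γ * ∫ u in Ioi (-((r - ℓ) / (2 * γ))), deriv f (ℓ - γ * u) * g0 |u|) ℓ :=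
  stmt_6_general f hf_smooth hf_bdd hf'_bdd g0 hg0_cont hg0_int γ hγ ℓ r hℓr
end

section
/- For all real ℓ < r, the partial derivative of S_R with respect to r exists and equals ∂S_R/∂r(ℓ,r) = (1/2) f((ℓ+r)/2) g((r−ℓ)/2) + ∫_{(ℓ+r)/2}^{∞} f′(x) g(|r−x|) dx. -/
open MeasureTheory Set Filter Topology Asymptotics

/-! Substituting `x = s + u` turns `S_R(ℓ, s)` into `∫_{a(s)}^∞ f(s + u) g(|u|) du` with
`a(s) = (ℓ - s)/2`, so `s` enters only through the smooth factor `f(s + ·)` and the lower limit.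
Writing `φ s u = f(s + u) g(|u|)`, split
`∫_{a(s)}^∞ φ s = ∫_{a(r)}^∞ φ s + ∫_{a(s)}^{a(r)} φ r + ∫_{a(s)}^{a(r)} (φ s - φ r)`.
The first term is differentiated under the integral sign (dominated by `sup |f'| · g`), the second
by the fundamental theorem of calculus, and the third is `o(s - r)`: its integrand is
`O(|s - r|)` since `f` is Lipschitz and `g ≤ 1`, on an interval of length `|a(s) - a(r)| = o(1)`. -/

theorem integral_Ioi_comp_const_add {E : Type*} [NormedAddCommGroup E] [NormedSpace ℝ E]
    (F : ℝ → E) (r c : ℝ) :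
    ∫ u in Ioi (c - r), F (r + u) = ∫ x in Ioi c, F x := by
  rw [← preimage_const_add_Ioi]
  exact (measurePreserving_add_left volume r).setIntegral_preimage_emb
    (Homeomorph.addLeft r).measurableEmbedding F _

theorem integral_Ioi_mul_abs_sub (F G : ℝ → ℝ) (c r : ℝ) :
    ∫ x in Ioi c, F x * G |r - x| = ∫ u in Ioi (c - r), F (r + u) * G |u| := by
  rw [← integral_Ioi_comp_const_add _ r]
  simp only [sub_add_cancel_left, abs_neg]

theorem abs_sub_le_mul_of_abs_deriv_le {f : ℝ → ℝ} {M : ℝ} (hf : Differentiable ℝ f)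
    (hM : ∀ x, |deriv f x| ≤ M) (x y : ℝ) : |f x - f y| ≤ M * |x - y| :=
  convex_univ.norm_image_sub_le_of_norm_deriv_le (fun z _ => hf z) (fun z _ => hM z)
    (mem_univ y) (mem_univ x)

theorem integrable_comp_abs_div {g : ℝ → ℝ} (hg : ∫ z in Ioi (0 : ℝ), g z ≠ 0) {γ : ℝ}
    (hγ : 0 < γ) : Integrable fun u => g (|u| / γ) := by
  refine Integrable.of_integral_ne_zero ?_
  rw [integral_comp_abs (f := fun u => g (u / γ))]
  simp_rw [div_eq_mul_inv]
  rw [integral_comp_mul_right_Ioi g 0 (inv_pos.2 hγ), zero_mul, smul_eq_mul, inv_inv]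
  exact mul_ne_zero two_ne_zero (mul_ne_zero hγ.ne' hg)

theorem hasDerivAt_intervalIntegral_sub_of_lipschitz {φ : ℝ → ℝ → ℝ} {a : ℝ → ℝ} {L r : ℝ}
    (hlip : ∀ s u, |φ s u - φ r u| ≤ L * |s - r|) (ha : ContinuousAt a r) :
    HasDerivAt (fun s => ∫ u in a s..a r, (φ s u - φ r u)) 0 r := by
  rw [hasDerivAt_iff_isLittleO]
  simp only [intervalIntegral.integral_same, smul_zero, sub_zero]
  have hsmall : (fun s => L * (a r - a s)) =o[𝓝 r] fun _ => (1 : ℝ) := by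
    rw [isLittleO_one_iff]
    simpa using ((tendsto_const_nhds (x := a r)).sub ha.tendsto).const_mul L
  refine IsBigO.trans_isLittleO (g := fun s => (s - r) * (L * (a r - a s))) ?_ ?_
  · refine IsBigO.of_bound 1 (Eventually.of_forall fun s => ?_)
    simp only [one_mul, norm_mul, Real.norm_eq_abs]
    refine (intervalIntegral.norm_integral_le_of_norm_le_const fun u _ =>
      (Real.norm_eq_abs _).trans_le (hlip s u)).trans ?_
    calc L * |s - r| * |a r - a s| ≤ |L| * |s - r| * |a r - a s| := by
          gcongr; exact le_abs_self L
      _ = |s - r| * (|L| * |a r - a s|) := by ring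
  · simpa using (isBigO_refl (fun s => s - r) (𝓝 r)).mul_isLittleO hsmall

theorem hasDerivAt_integral_Ioi_of_lipschitz {φ : ℝ → ℝ → ℝ} {a : ℝ → ℝ} {a' D L r : ℝ}
    (hφ : ∀ s, Integrable (φ s)) (hφr : Continuous (φ r))
    (hlip : ∀ s u, |φ s u - φ r u| ≤ L * |s - r|) (ha : HasDerivAt a a' r)
    (hD : HasDerivAt (fun s => ∫ u in Ioi (a r), φ s u) D r) :
    HasDerivAt (fun s => ∫ u in Ioi (a s), φ s u) (D - φ r (a r) * a') r := by
  have hsplit : ∀ s, ∫ u in Ioi (a s), φ s u = (∫ u in Ioi (a r), φ s u)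
      + (∫ u in a s..a r, φ r u) + ∫ u in a s..a r, (φ s u - φ r u) := by
    intro s
    rw [← intervalIntegral.integral_interval_add_Ioi (hφ s).integrableOn (hφ s).integrableOn,
      intervalIntegral.integral_sub (hφ s).intervalIntegrable (hφ r).intervalIntegrable]
    ring
  have hFTC : HasDerivAt (fun s => ∫ u in a s..a r, φ r u) (-φ r (a r) * a') r :=
    (intervalIntegral.integral_hasDerivAt_left (hφ r).intervalIntegrable
      (hφr.stronglyMeasurableAtFilter _ _) hφr.continuousAt).comp r ha
  have hsum :=
    (hD.add hFTC).add (hasDerivAt_intervalIntegral_sub_of_lipschitz hlip ha.continuousAt)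
  rw [show D - φ r (a r) * a' = D + -φ r (a r) * a' + 0 by ring]
  exact hsum.congr_of_eventuallyEq (Eventually.of_forall hsplit)

theorem integrable_comp_const_add_mul {μ : Measure ℝ} {f h : ℝ → ℝ} {M : ℝ}
    (hf : Continuous f) (hfM : ∀ x, |f x| ≤ M) (hh : Integrable h μ) (s : ℝ) :
    Integrable (fun u => f (s + u) * h u) μ :=
  hh.bdd_mul (hf.comp (continuous_const_add s)).aestronglyMeasurable
    (ae_of_all _ fun _ => (Real.norm_eq_abs _).trans_le (hfM _))

theorem hasDerivAt_integral_comp_add_mul_s7 {μ : Measure ℝ} {f h : ℝ → ℝ} {M M' : ℝ}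
    (hf : Differentiable ℝ f) (hfM : ∀ x, |f x| ≤ M) (hf'M : ∀ x, |deriv f x| ≤ M')
    (hh : Integrable h μ) (r : ℝ) :
    HasDerivAt (fun s => ∫ u, f (s + u) * h u ∂μ) (∫ u, deriv f (r + u) * h u ∂μ) r := by
  refine (hasDerivAt_integral_of_dominated_loc_of_deriv_le (x₀ := r)
    (F' := fun s u => deriv f (s + u) * h u) (bound := fun u => M' * ‖h u‖) univ_mem
    (Eventually.of_forall fun s => (integrable_comp_const_add_mul hf.continuous hfM hh s).1)
    (integrable_comp_const_add_mul hf.continuous hfM hh r) ?_ ?_ (hh.norm.const_mul M') ?_).2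
  · exact ((measurable_deriv f).comp (measurable_const_add r)).aestronglyMeasurable.mul
      hh.aestronglyMeasurable
  · refine ae_of_all _ fun _ s _ => ?_
    rw [norm_mul, Real.norm_eq_abs]
    exact mul_le_mul_of_nonneg_right (hf'M _) (norm_nonneg _)
  · exact ae_of_all _ fun u s _ =>
      ((hf (s + u)).hasDerivAt.comp s ((hasDerivAt_id s).add_const u)).mul_const (h u)
        |>.congr_deriv (by simp)

theorem hasDerivAt_integral_Ioi_comp_add_mul {f h a : ℝ → ℝ} {M M' K a' r : ℝ}
    (hf : Differentiable ℝ f) (hfM : ∀ x, |f x| ≤ M) (hf'M : ∀ x, |deriv f x| ≤ M')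
    (hh : Integrable h) (hhc : Continuous h) (hhK : ∀ u, |h u| ≤ K) (ha : HasDerivAt a a' r) :
    HasDerivAt (fun s => ∫ u in Ioi (a s), f (s + u) * h u)
      ((∫ u in Ioi (a r), deriv f (r + u) * h u) - f (r + a r) * h (a r) * a') r := by
  have hlip : ∀ s u, |f (s + u) * h u - f (r + u) * h u| ≤ M' * K * |s - r| := fun s u => by
    have hM' : 0 ≤ M' := (abs_nonneg _).trans (hf'M 0)
    have hf_lip := abs_sub_le_mul_of_abs_deriv_le hf hf'M (s + u) (r + u)
    rw [add_sub_add_right_eq_sub] at hf_lip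
    calc |f (s + u) * h u - f (r + u) * h u| = |f (s + u) - f (r + u)| * |h u| := by
          rw [← sub_mul, abs_mul]
      _ ≤ M' * |s - r| * K := mul_le_mul hf_lip (hhK u) (abs_nonneg _) (by positivity)
      _ = M' * K * |s - r| := by ring
  exact hasDerivAt_integral_Ioi_of_lipschitz (integrable_comp_const_add_mul hf.continuous hfM hh)
    ((hf.continuous.comp (continuous_const_add r)).mul hhc) hlip ha
    (hasDerivAt_integral_comp_add_mul_s7 hf hfM hf'M hh.integrableOn r)

theorem stmt_7_general
    (f : ℝ → ℝ)
    (hf_smooth : ContDiff ℝ 1 f)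
    (hf_bdd : ∃ M, ∀ x, |f x| ≤ M)
    (hf'_bdd : ∃ M, ∀ x, |deriv f x| ≤ M)
    (g0 : ℝ → ℝ)
    (hg0_cont : ContinuousOn g0 (Ici 0))
    (hg0_pos : ∀ z ∈ Ici (0 : ℝ), 0 < g0 z)
    (hg0_le_one : ∀ z ∈ Ici (0 : ℝ), g0 z ≤ 1)
    (hg0_int : ∫ z in Ioi (0 : ℝ), g0 z = 1)
    (γ : ℝ) (hγ : 0 < γ)
    (ℓ r : ℝ) (hℓr : ℓ < r) :
    HasDerivAt (fun r' => ∫ x in Ioi ((ℓ + r') / 2), f x * g0 (|r' - x| / γ))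
      ((1 / 2) * f ((ℓ + r) / 2) * g0 ((r - ℓ) / 2 / γ)
        + ∫ x in Ioi ((ℓ + r) / 2), deriv f x * g0 (|r - x| / γ)) r := by
  obtain ⟨M, hM⟩ := hf_bdd
  obtain ⟨M', hM'⟩ := hf'_bdd
  have hg_int : Integrable fun u => g0 (|u| / γ) :=
    integrable_comp_abs_div (by rw [hg0_int]; exact one_ne_zero) hγ
  have hg_cont : Continuous fun u => g0 (|u| / γ) :=
    hg0_cont.comp_continuous (continuous_abs.div_const γ) fun u => div_nonneg (abs_nonneg u) hγ.le
  have hg_le : ∀ u, |g0 (|u| / γ)| ≤ 1 := fun u => by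
    have hu : |u| / γ ∈ Ici 0 := div_nonneg (abs_nonneg u) hγ.le
    rw [abs_of_pos (hg0_pos _ hu)]
    exact hg0_le_one _ hu
  have ha : HasDerivAt (fun s => (ℓ + s) / 2 - s) (1 / 2 - 1) r :=
    (((hasDerivAt_id' r).const_add ℓ).div_const 2).sub (hasDerivAt_id' r)
  have hderiv := hasDerivAt_integral_Ioi_comp_add_mul (hf_smooth.differentiable one_ne_zero) hM hM'
    hg_int hg_cont hg_le ha
  simp only [integral_Ioi_mul_abs_sub (G := fun z => g0 (z / γ))]
  convert hderiv using 1
  rw [add_sub_cancel, abs_of_neg (by linarith : (ℓ + r) / 2 - r < 0), neg_sub,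
    show r - (ℓ + r) / 2 = (r - ℓ) / 2 by ring]
  ring

/-- With abstentions modeled by `g(z) = g0(z/γ)`, the right candidate's vote share
`S_R(ℓ,r) = ∫_{(ℓ+r)/2}^{∞} f(x) g(|r−x|) dx` is differentiable in r for ℓ < r, with
`∂S_R/∂r(ℓ,r) = (1/2) f((ℓ+r)/2) g((r−ℓ)/2) + ∫_{(ℓ+r)/2}^{∞} f′(x) g(|r−x|) dx`. -/
theorem stmt_7
    (f : ℝ → ℝ)
    (hf_smooth : ContDiff ℝ 1 f)
    (hf_bdd : ∃ M, ∀ x, |f x| ≤ M)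
    (hf'_bdd : ∃ M, ∀ x, |deriv f x| ≤ M)
    (hf_pos : ∀ x, 0 < f x)
    (hf_total : ∫ x, f x = 1)
    (hf_median : ∫ x in Iic (0 : ℝ), f x = 1 / 2)
    (g0 : ℝ → ℝ)
    (hg0_cont : ContinuousOn g0 (Ici 0))
    (hg0_pos : ∀ z ∈ Ici (0 : ℝ), 0 < g0 z)
    (hg0_le_one : ∀ z ∈ Ici (0 : ℝ), g0 z ≤ 1)
    (hg0_anti : AntitoneOn g0 (Ici 0))
    (hg0_zero : g0 0 = 1)
    (hg0_decay : g0 =O[atTop] fun z => 1 / z ^ 2)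
    (hg0_int : ∫ z in Ioi (0 : ℝ), g0 z = 1)
    (γ : ℝ) (hγ : 0 < γ)
    (ℓ r : ℝ) (hℓr : ℓ < r) :
    HasDerivAt (fun r' => ∫ x in Ioi ((ℓ + r') / 2), f x * g0 (|r' - x| / γ))
      ((1 / 2) * f ((ℓ + r) / 2) * g0 ((r - ℓ) / 2 / γ)
        + ∫ x in Ioi ((ℓ + r) / 2), deriv f x * g0 (|r - x| / γ)) r :=
  stmt_7_general f hf_smooth hf_bdd hf'_bdd g0 hg0_cont hg0_pos hg0_le_one hg0_int γ hγ ℓ r hℓr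
end

section
/- For all real ℓ < r, ∂S_R/∂r(ℓ,r) = (1/2) f((ℓ+r)/2) g_0((r−ℓ)/(2γ)) + γ ∫_{−(r−ℓ)/(2γ)}^{∞} f′(r + γu) g_0(|u|) du. -/
open MeasureTheory Set Filter Topology Asymptotics

/-!
The affine substitution `x = r' + γ u` moves the dependence on `r'` out of the kernel and into
`f`, turning the vote share into `γ ∫_{a(r')}^∞ f(r' + γu) g0(|u|) du` with lower limit
`a(r') = -(r' - ℓ)/(2γ)`. This is differentiated by the Leibniz rule: the moving lower limit
contributes `-a'(r) · f(r + γ a(r)) g0(|a(r)|)`, which is the boundary term, and the integrand is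
differentiated under the integral sign, dominated by `sup |f'| · g0(|u|)`.
-/

theorem integral_Ioi_comp_const_add_mul {E : Type*} [NormedAddCommGroup E] [NormedSpace ℝ E]
    (g : ℝ → E) (t a : ℝ) {γ : ℝ} (hγ : 0 < γ) :
    ∫ u in Ioi a, g (t + γ * u) = γ⁻¹ • ∫ x in Ioi (t + γ * a), g x := by
  have himage : (fun u => t + γ * u) '' Ioi a = Ioi (t + γ * a) := by
    rw [← image_const_add_Ioi, ← image_mul_left_Ioi hγ, image_image]
  rw [← himage, integral_image_eq_integral_abs_deriv_smul measurableSet_Ioi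
      (f' := fun _ => γ) (fun u _ => by
        simpa using (((hasDerivAt_id' u).const_mul γ).const_add t).hasDerivWithinAt)
      (fun u _ v _ h => mul_left_cancel₀ hγ.ne' (add_left_cancel h)),
    integral_smul, smul_smul, abs_of_pos hγ, inv_mul_cancel₀ hγ.ne', one_smul]

theorem integral_Ioi_mul_kernel_eq_rescaled (f g0 : ℝ → ℝ) {γ : ℝ} (hγ : 0 < γ) (ℓ t : ℝ) :
    ∫ x in Ioi ((ℓ + t) / 2), f x * g0 (|t - x| / γ)
      = γ * ∫ u in Ioi (-((t - ℓ) / (2 * γ))), f (t + γ * u) * g0 |u| := by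
  have hend : t + γ * -((t - ℓ) / (2 * γ)) = (ℓ + t) / 2 := by field_simp; ring
  have hkernel : ∀ u, |t - (t + γ * u)| / γ = |u| := fun u => by
    rw [sub_add_cancel_left, abs_neg, abs_mul, abs_of_pos hγ, mul_div_cancel_left₀ _ hγ.ne']
  calc ∫ x in Ioi ((ℓ + t) / 2), f x * g0 (|t - x| / γ)
      = γ * γ⁻¹ • ∫ x in Ioi (t + γ * -((t - ℓ) / (2 * γ))), f x * g0 (|t - x| / γ) := by
        rw [hend, smul_eq_mul, mul_inv_cancel_left₀ hγ.ne']
    _ = γ * ∫ u in Ioi (-((t - ℓ) / (2 * γ))), f (t + γ * u) * g0 |u| := by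
        rw [← integral_Ioi_comp_const_add_mul (fun x => f x * g0 (|t - x| / γ)) t _ hγ]
        simp only [hkernel]

theorem integrableOn_Ioi_comp_abs {E : Type*} [NormedAddCommGroup E] {g : ℝ → E}
    (hcont : ContinuousOn g (Ici 0)) (hint : IntegrableOn g (Ioi 0)) (b : ℝ) :
    IntegrableOn (fun u => g |u|) (Ioi b) := by
  have hIcc : IntegrableOn (fun u => g |u|) (Icc b 0) :=
    (hcont.comp continuous_abs.continuousOn fun u _ => abs_nonneg u).integrableOn_Icc
  have hIoi : IntegrableOn (fun u => g |u|) (Ioi 0) :=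
    hint.congr_fun (fun u hu => by rw [abs_of_pos hu]) measurableSet_Ioi
  refine (hIcc.union hIoi).mono_set fun u hu => ?_
  rcases le_or_gt u 0 with h | h
  exacts [Or.inl ⟨le_of_lt hu, h⟩, Or.inr h]

theorem hasDerivAt_integral_comp_add_mul_s8 {α : Type*} [MeasurableSpace α] {μ : Measure α}
    {f : ℝ → ℝ} {v w : α → ℝ} {A B : ℝ} (hf : Differentiable ℝ f) (hfA : ∀ x, |f x| ≤ A)
    (hfB : ∀ x, |deriv f x| ≤ B) (hv : Measurable v) (hw : Integrable w μ) (t : ℝ) :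
    HasDerivAt (fun s => ∫ x, f (s + v x) * w x ∂μ) (∫ x, deriv f (t + v x) * w x ∂μ) t := by
  have hmeas : ∀ s, AEStronglyMeasurable (fun x => f (s + v x)) μ := fun s =>
    (hf.continuous.measurable.comp (measurable_const.add hv)).aestronglyMeasurable
  refine (hasDerivAt_integral_of_dominated_loc_of_deriv_le (bound := fun x => B * |w x|)
    (F' := fun s x => deriv f (s + v x) * w x)
    univ_mem (.of_forall fun s => (hmeas s).mul hw.1)
    (hw.bdd_mul (hmeas t) (.of_forall fun x => hfA _))
    (((measurable_deriv f).comp (measurable_const.add hv)).aestronglyMeasurable.mul hw.1)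
    (.of_forall fun x s _ => ?_) (hw.abs.const_mul B) (.of_forall fun x s _ => ?_)).2
  · rw [Real.norm_eq_abs, abs_mul]
    exact mul_le_mul_of_nonneg_right (hfB _) (abs_nonneg _)
  · simpa [Function.comp_def] using
      ((hf _).hasDerivAt.comp s ((hasDerivAt_id' s).add_const (v x))).mul_const (w x)

section LeibnizRule

variable {E : Type*} [NormedAddCommGroup E] [NormedSpace ℝ E] [CompleteSpace E]
  {φ : ℝ → ℝ → E} {a : ℝ → ℝ} {a' r : ℝ}

theorem hasDerivAt_parametric_intervalIntegral_left (ha : HasDerivAt a a' r)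
    (hφ : ContinuousAt (Function.uncurry φ) (r, a r))
    (hint : ∀ᶠ t in 𝓝 r, IntervalIntegrable (φ t) volume (a t) (a r)) :
    HasDerivAt (fun t => ∫ u in a t..a r, φ t u) (-a' • φ r (a r)) r := by
  set p := φ r (a r)
  set R : ℝ → E := fun t => ∫ u in a t..a r, (φ t u - p)
  -- The integrand of `R` is `o(1)` on an interval of length `|a t - a r| = O(|t - r|)`.
  have hR : R =o[𝓝 r] fun t => a t - a r := by
    refine isLittleO_iff.2 fun ε hε => ?_
    obtain ⟨δ, hδ, hφδ⟩ := Metric.continuousAt_iff.1 hφ ε hε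
    filter_upwards [ha.continuousAt (Metric.ball_mem_nhds _ hδ), Metric.ball_mem_nhds r hδ]
      with t hat ht
    refine (intervalIntegral.norm_integral_le_of_norm_le_const fun u hu => ?_).trans_eq
      (by rw [Real.norm_eq_abs, abs_sub_comm])
    have hu' : dist u (a r) ≤ dist (a t) (a r) := by
      simpa only [Real.dist_eq, abs_sub_comm] using abs_sub_right_of_mem_uIcc (uIoc_subset_uIcc hu)
    rw [← dist_eq_norm]
    refine (hφδ (x := (t, u)) ?_).le
    rw [Prod.dist_eq]
    exact max_lt ht (hu'.trans_lt hat)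
  have hR' : HasDerivAt R 0 r := by
    rw [hasDerivAt_iff_isLittleO]
    simpa [R] using hR.trans_isBigO ha.isBigO_sub
  have hlin : HasDerivAt (fun t => (a r - a t) • p) (-a' • p) r := by
    simpa using (ha.const_sub (a r)).smul_const p
  refine (hlin.add hR').congr_of_eventuallyEq ?_ |>.congr_deriv (add_zero _)
  filter_upwards [hint] with t ht
  show _ = (a r - a t) • p + ∫ u in a t..a r, (φ t u - p)
  rw [intervalIntegral.integral_sub ht intervalIntegrable_const, intervalIntegral.integral_const]
  abel

theorem hasDerivAt_parametric_integral_Ioi {I : E} (ha : HasDerivAt a a' r)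
    (hφ : ContinuousAt (Function.uncurry φ) (r, a r))
    (hint : ∀ᶠ t in 𝓝 r, ∀ b, IntegrableOn (φ t) (Ioi b))
    (htail : HasDerivAt (fun t => ∫ u in Ioi (a r), φ t u) I r) :
    HasDerivAt (fun t => ∫ u in Ioi (a t), φ t u) (-a' • φ r (a r) + I) r := by
  have hint' : ∀ᶠ t in 𝓝 r, IntervalIntegrable (φ t) volume (a t) (a r) :=
    hint.mono fun t ht => intervalIntegrable_iff.2 ((ht _).mono_set Ioc_subset_Ioi_self)
  refine ((hasDerivAt_parametric_intervalIntegral_left ha hφ hint').add htail)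
    |>.congr_of_eventuallyEq ?_
  filter_upwards [hint] with t ht
  exact (intervalIntegral.integral_interval_add_Ioi (ht _) (ht _)).symm

end LeibnizRule

theorem stmt_8_general
    (f : ℝ → ℝ)
    (hf_smooth : ContDiff ℝ 1 f)
    (hf_bdd : ∃ M, ∀ x, |f x| ≤ M)
    (hf'_bdd : ∃ M, ∀ x, |deriv f x| ≤ M)
    (g0 : ℝ → ℝ)
    (hg0_cont : ContinuousOn g0 (Ici 0))
    (hg0_int : ∫ z in Ioi (0 : ℝ), g0 z = 1)
    (γ : ℝ) (hγ : 0 < γ)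
    (ℓ r : ℝ) (hℓr : ℓ < r) :
    HasDerivAt (fun r' => ∫ x in Ioi ((ℓ + r') / 2), f x * g0 (|r' - x| / γ))
      ((1 / 2) * f ((ℓ + r) / 2) * g0 ((r - ℓ) / (2 * γ))
        + γ * ∫ u in Ioi (-((r - ℓ) / (2 * γ))), deriv f (r + γ * u) * g0 |u|) r := by
  obtain ⟨A, hA⟩ := hf_bdd
  obtain ⟨B, hB⟩ := hf'_bdd
  have hf : Differentiable ℝ f := hf_smooth.differentiable one_ne_zero
  have hw : ∀ b, IntegrableOn (fun u => g0 |u|) (Ioi b) := integrableOn_Ioi_comp_abs hg0_cont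
    (Integrable.of_integral_ne_zero (by rw [hg0_int]; exact one_ne_zero))
  set φ : ℝ → ℝ → ℝ := fun t u => f (t + γ * u) * g0 |u|
  have ha : HasDerivAt (fun t => -((t - ℓ) / (2 * γ))) (-(1 / (2 * γ))) r :=
    (((hasDerivAt_id' r).sub_const ℓ).div_const (2 * γ)).neg
  have hφ : Continuous (Function.uncurry φ) :=
    (hf.continuous.comp (continuous_fst.add (continuous_const.mul continuous_snd))).mul
      ((hg0_cont.comp_continuous continuous_abs abs_nonneg).comp continuous_snd)
  have hint : ∀ t b, IntegrableOn (φ t) (Ioi b) := fun t b =>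
    (hw b).bdd_mul (hf.continuous.comp (by fun_prop)).aestronglyMeasurable
      (.of_forall fun u => hA _)
  have htail := hasDerivAt_integral_comp_add_mul_s8 hf hA hB (measurable_const_mul γ)
    (hw (-((r - ℓ) / (2 * γ)))) r
  rw [funext (integral_Ioi_mul_kernel_eq_rescaled f g0 hγ ℓ)]
  refine (hasDerivAt_parametric_integral_Ioi ha hφ.continuousAt (.of_forall hint) htail
    |>.const_mul γ).congr_deriv ?_
  have hmid : r + γ * -((r - ℓ) / (2 * γ)) = (ℓ + r) / 2 := by field_simp; ring
  have hdist : |-((r - ℓ) / (2 * γ))| = (r - ℓ) / (2 * γ) := by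
    rw [abs_neg, abs_of_pos (div_pos (sub_pos.2 hℓr) (by positivity))]
  simp only [φ, smul_eq_mul, hmid, hdist]
  field_simp

/-- For ℓ < r, after the substitution u = (x−r)/γ,
`∂S_R/∂r(ℓ,r) = (1/2) f((ℓ+r)/2) g0((r−ℓ)/(2γ)) + γ ∫_{−(r−ℓ)/(2γ)}^{∞} f′(r+γu) g0(|u|) du`. -/
theorem stmt_8
    (f : ℝ → ℝ)
    (hf_smooth : ContDiff ℝ 1 f)
    (hf_bdd : ∃ M, ∀ x, |f x| ≤ M)
    (hf'_bdd : ∃ M, ∀ x, |deriv f x| ≤ M)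
    (hf_pos : ∀ x, 0 < f x)
    (hf_total : ∫ x, f x = 1)
    (hf_median : ∫ x in Iic (0 : ℝ), f x = 1 / 2)
    (g0 : ℝ → ℝ)
    (hg0_cont : ContinuousOn g0 (Ici 0))
    (hg0_pos : ∀ z ∈ Ici (0 : ℝ), 0 < g0 z)
    (hg0_le_one : ∀ z ∈ Ici (0 : ℝ), g0 z ≤ 1)
    (hg0_anti : AntitoneOn g0 (Ici 0))
    (hg0_zero : g0 0 = 1)
    (hg0_decay : g0 =O[atTop] fun z => 1 / z ^ 2)
    (hg0_int : ∫ z in Ioi (0 : ℝ), g0 z = 1)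
    (γ : ℝ) (hγ : 0 < γ)
    (ℓ r : ℝ) (hℓr : ℓ < r) :
    HasDerivAt (fun r' => ∫ x in Ioi ((ℓ + r') / 2), f x * g0 (|r' - x| / γ))
      ((1 / 2) * f ((ℓ + r) / 2) * g0 ((r - ℓ) / (2 * γ))
        + γ * ∫ u in Ioi (-((r - ℓ) / (2 * γ))), deriv f (r + γ * u) * g0 |u|) r :=
  stmt_8_general f hf_smooth hf_bdd hf'_bdd g0 hg0_cont hg0_int γ hγ ℓ r hℓr
end

section
/- Define D(γ, r) = −f(r)/2 + γ ∫_0^∞ f′(r − γu) g_0(u) du, which is the limiting value of ∂S_L/∂ℓ(ℓ, r) as ℓ → r when the loyalty parameter is γ. For every real r there exists γ_0 > 0 such that for all 0 < γ < γ_0, D(γ, r) < 0. In other words, when voter loyalty is sufficiently low, it is not in the left candidate's interest to move arbitrarily close to the right candidate's position r. -/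
/-!
Since `|f'| ≤ M` and `g0` is a probability density on `(0, ∞)`, the integral term of `D(γ, r)`
is at most `γ M`, which is beaten by `f r / 2 > 0` as soon as `γ < f r / (2 (M + 1))`.
-/

open MeasureTheory Set Filter Topology Asymptotics

-- No measurability of `φ` is needed: if `φ * w` is not integrable the left side is `0`.
theorem abs_integral_mul_le_of_abs_le {α : Type*} [MeasurableSpace α] {μ : Measure α}
    {φ w : α → ℝ} {M : ℝ} (hφM : ∀ x, |φ x| ≤ M)
    (hw : Integrable w μ) (hw_nonneg : 0 ≤ᵐ[μ] w) :
    |∫ x, φ x * w x ∂μ| ≤ M * ∫ x, w x ∂μ := by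
  rw [← Real.norm_eq_abs, ← integral_const_mul]
  refine norm_integral_le_of_norm_le (hw.const_mul M) ?_
  filter_upwards [hw_nonneg] with x hx
  rw [norm_mul, Real.norm_eq_abs, Real.norm_of_nonneg hx]
  exact mul_le_mul_of_nonneg_right (hφM x) hx

theorem abs_integral_deriv_comp_mul_density_le {f g0 : ℝ → ℝ} {M : ℝ}
    (hf' : ∀ x, |deriv f x| ≤ M) (hg0_nonneg : ∀ z ∈ Ioi (0 : ℝ), 0 ≤ g0 z)
    (hg0_int : ∫ z in Ioi (0 : ℝ), g0 z = 1) (r γ : ℝ) :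
    |∫ u in Ioi (0 : ℝ), deriv f (r - γ * u) * g0 u| ≤ M := by
  have hg0 : IntegrableOn g0 (Ioi 0) :=
    Integrable.of_integral_ne_zero (by rw [hg0_int]; exact one_ne_zero)
  have hg0_ae_nonneg : 0 ≤ᵐ[volume.restrict (Ioi 0)] g0 :=
    (ae_restrict_mem measurableSet_Ioi).mono hg0_nonneg
  simpa [hg0_int] using abs_integral_mul_le_of_abs_le (fun u => hf' (r - γ * u)) hg0 hg0_ae_nonneg

theorem stmt_10_general
    (f : ℝ → ℝ)
    (hf'_bdd : ∃ M, ∀ x, |deriv f x| ≤ M)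
    (hf_pos : ∀ x, 0 < f x)
    (g0 : ℝ → ℝ)
    (hg0_pos : ∀ z ∈ Ici (0 : ℝ), 0 < g0 z)
    (hg0_int : ∫ z in Ioi (0 : ℝ), g0 z = 1)
    (r : ℝ) :
    ∃ γ₀ > 0, ∀ γ : ℝ, 0 < γ → γ < γ₀ →
      -f r / 2 + γ * ∫ u in Ioi (0 : ℝ), deriv f (r - γ * u) * g0 u < 0 := by
  obtain ⟨M, hM⟩ := hf'_bdd
  have hM0 : 0 ≤ M := (abs_nonneg _).trans (hM 0)
  have hfr := hf_pos r
  refine ⟨f r / (2 * (M + 1)), by positivity, fun γ hγ hγ₀ => ?_⟩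
  have hγM : γ * (M + 1) < f r / 2 := by
    rw [lt_div_iff₀ (by positivity)] at hγ₀
    linarith
  calc -f r / 2 + γ * ∫ u in Ioi (0 : ℝ), deriv f (r - γ * u) * g0 u
      ≤ -f r / 2 + γ * M := by
        gcongr
        exact (abs_le.1 (abs_integral_deriv_comp_mul_density_le hM
          (fun z hz => (hg0_pos z (Ioi_subset_Ici_self hz)).le) hg0_int r γ)).2
    _ < 0 := by nlinarith

/-- Let `D(γ,r) = −f(r)/2 + γ ∫_0^∞ f′(r − γu) g0(u) du` (the limiting value of
`∂S_L/∂ℓ(ℓ,r)` as ℓ → r with loyalty parameter γ).  For every r there is γ₀ > 0 such that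
`D(γ,r) < 0` for all 0 < γ < γ₀: when voter loyalty is sufficiently low, it is not in the left
candidate's interest to move arbitrarily close to r. -/
theorem stmt_10
    (f : ℝ → ℝ)
    (hf_smooth : ContDiff ℝ 1 f)
    (hf_bdd : ∃ M, ∀ x, |f x| ≤ M)
    (hf'_bdd : ∃ M, ∀ x, |deriv f x| ≤ M)
    (hf_pos : ∀ x, 0 < f x)
    (hf_total : ∫ x, f x = 1)
    (hf_median : ∫ x in Iic (0 : ℝ), f x = 1 / 2)
    (g0 : ℝ → ℝ)
    (hg0_cont : ContinuousOn g0 (Ici 0))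
    (hg0_pos : ∀ z ∈ Ici (0 : ℝ), 0 < g0 z)
    (hg0_le_one : ∀ z ∈ Ici (0 : ℝ), g0 z ≤ 1)
    (hg0_anti : AntitoneOn g0 (Ici 0))
    (hg0_zero : g0 0 = 1)
    (hg0_decay : g0 =O[atTop] fun z => 1 / z ^ 2)
    (hg0_int : ∫ z in Ioi (0 : ℝ), g0 z = 1)
    (r : ℝ) :
    ∃ γ₀ > 0, ∀ γ : ℝ, 0 < γ → γ < γ₀ →
      -f r / 2 + γ * ∫ u in Ioi (0 : ℝ), deriv f (r - γ * u) * g0 u < 0 :=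
  stmt_10_general f hf'_bdd hf_pos g0 hg0_pos hg0_int r
end

section
/- Fix real numbers ℓ < r, and regard S_L(ℓ,r) as a function of the loyalty parameter γ > 0 through g(z) = g_0(z/γ). Then S_L(ℓ,r) ∼ 2γ f(ℓ) as γ → 0+, i.e., lim_{γ→0+} S_L(ℓ,r)/γ = 2 f(ℓ). -/
/-!
Substituting `x = ℓ + γ u` turns `S_L(ℓ,r) / γ` into
`∫_{u ≤ (r - ℓ) / (2γ)} f(ℓ + γ u) g₀(|u|) du`. As `γ → 0⁺` the integrand tends to
`f(ℓ) g₀(|u|)` and is dominated by `M |g₀(|u|)|` with `M` a bound for `|f|`, so by dominated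
convergence the limit is `f(ℓ) ∫_ℝ g₀(|u|) du = 2 f(ℓ) ∫_0^∞ g₀ = 2 f(ℓ)`.
-/

open MeasureTheory Set Filter Topology Asymptotics

lemma integrable_comp_abs_of_integrableOn_Ioi {E : Type*} [NormedAddCommGroup E] {g : ℝ → E}
    (hg : IntegrableOn g (Ioi 0)) : Integrable fun u : ℝ => g |u| := by
  have hIoi : IntegrableOn (fun u : ℝ => g |u|) (Ioi 0) :=
    hg.congr_fun (fun u hu => by rw [abs_of_pos hu]) measurableSet_Ioi
  have hIio : IntegrableOn (fun u : ℝ => g |u|) (Iio 0) := by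
    have := IntegrableOn.comp_neg_Iio (c := (0 : ℝ)) (f := fun u : ℝ => g |u|) (μ := volume)
      (by rwa [neg_zero])
    simpa only [abs_neg] using this
  rw [← integrableOn_univ, ← Iio_union_Ici (a := (0 : ℝ))]
  exact hIio.union ((integrableOn_Ici_iff_integrableOn_Ioi (by simp)).mpr hIoi)

lemma abs_sub_mul_add_div {γ : ℝ} (hγ : 0 < γ) (ℓ u : ℝ) : |ℓ - (γ * u + ℓ)| / γ = |u| := by
  rw [show ℓ - (γ * u + ℓ) = -(γ * u) by ring, abs_neg, abs_mul, abs_of_pos hγ,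
    mul_div_cancel_left₀ _ hγ.ne']

lemma setIntegral_Iic_comp_mul_add {E : Type*} [NormedAddCommGroup E] [NormedSpace ℝ E]
    (F : ℝ → E) (ℓ m : ℝ) {γ : ℝ} (hγ : 0 < γ) :
    ∫ u in Iic ((m - ℓ) / γ), F (γ * u + ℓ) = γ⁻¹ • ∫ x in Iic m, F x := by
  have hpre : ∀ u, (Iic ((m - ℓ) / γ)).indicator (fun u => F (γ * u + ℓ)) u
      = (Iic m).indicator F (γ * u + ℓ) := fun u => by
    simp only [indicator_apply, mem_Iic, le_div_iff₀ hγ, mul_comm u γ, le_sub_iff_add_le]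
  rw [← integral_indicator measurableSet_Iic, ← integral_indicator measurableSet_Iic]
  calc ∫ u, (Iic ((m - ℓ) / γ)).indicator (fun u => F (γ * u + ℓ)) u
      = ∫ u, (fun v => (Iic m).indicator F (v + ℓ)) (γ * u) := by simp_rw [hpre]
    _ = |γ⁻¹| • ∫ v, (Iic m).indicator F (v + ℓ) :=
      Measure.integral_comp_mul_left (fun v => (Iic m).indicator F (v + ℓ)) γ
    _ = γ⁻¹ • ∫ x, (Iic m).indicator F x := by
      rw [integral_add_right_eq_self, abs_of_pos (inv_pos.mpr hγ)]

lemma tendsto_setIntegral_Iic_div_comp_mul_add {φ G : ℝ → ℝ} {M : ℝ} (hφ : Measurable φ)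
    (hφM : ∀ x, |φ x| ≤ M) (ℓ : ℝ) (hφℓ : ContinuousAt φ ℓ) (hG : Integrable G) {a : ℝ}
    (ha : 0 < a) :
    Tendsto (fun γ => ∫ u in Iic (a / γ), φ (γ * u + ℓ) * G u) (𝓝[>] 0)
      (𝓝 (φ ℓ * ∫ u, G u)) := by
  simp_rw [← integral_indicator measurableSet_Iic, ← integral_const_mul]
  refine tendsto_integral_filter_of_dominated_convergence (fun u => M * ‖G u‖)
    (Eventually.of_forall fun γ => ?_) (Eventually.of_forall fun γ => ?_) (hG.norm.const_mul M)
    (Eventually.of_forall fun u => ?_)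
  · exact (((hφ.comp (by fun_prop)).aestronglyMeasurable).mul hG.1).indicator measurableSet_Iic
  · refine Eventually.of_forall fun u => (norm_indicator_le_norm_self _ _).trans ?_
    rw [norm_mul, Real.norm_eq_abs]
    gcongr
    exact hφM _
  · have hlarge : ∀ᶠ γ in 𝓝[>] (0 : ℝ), u ∈ Iic (a / γ) :=
      ((tendsto_inv_nhdsGT_zero.const_mul_atTop ha).eventually_ge_atTop u).mono
        fun γ h => by rwa [mem_Iic, div_eq_mul_inv]
    have hshift : Tendsto (fun γ : ℝ => γ * u + ℓ) (𝓝[>] 0) (𝓝 ℓ) := by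
      simpa using ((tendsto_id.mul_const u).add_const ℓ).mono_left (nhdsWithin_le_nhds (a := 0))
    exact ((hφℓ.tendsto.comp hshift).mul_const (G u)).congr'
      (hlarge.mono fun γ h => (indicator_of_mem h _).symm)

theorem stmt_14_general
    (f : ℝ → ℝ)
    (hf_smooth : ContDiff ℝ 1 f)
    (hf_bdd : ∃ M, ∀ x, |f x| ≤ M)
    (g0 : ℝ → ℝ)
    (hg0_int : ∫ z in Ioi (0 : ℝ), g0 z = 1)
    (ℓ r : ℝ) (hℓr : ℓ < r) :
    Tendsto (fun γ : ℝ => (∫ x in Iic ((ℓ + r) / 2), f x * g0 (|ℓ - x| / γ)) / γ)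
      (𝓝[>] 0) (𝓝 (2 * f ℓ)) := by
  obtain ⟨M, hM⟩ := hf_bdd
  have hg0_integrable : IntegrableOn g0 (Ioi 0) :=
    Integrable.of_integral_ne_zero (by rw [hg0_int]; norm_num)
  have hlim := tendsto_setIntegral_Iic_div_comp_mul_add hf_smooth.continuous.measurable hM ℓ
    hf_smooth.continuous.continuousAt (integrable_comp_abs_of_integrableOn_Ioi hg0_integrable)
    (a := (ℓ + r) / 2 - ℓ) (by linarith)
  rw [integral_comp_abs, hg0_int, mul_one, mul_comm] at hlim
  refine hlim.congr' ?_
  filter_upwards [self_mem_nhdsWithin] with γ (hγ : 0 < γ)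
  have hsubst := setIntegral_Iic_comp_mul_add (fun x => f x * g0 (|ℓ - x| / γ)) ℓ ((ℓ + r) / 2) hγ
  rw [smul_eq_mul, inv_mul_eq_div] at hsubst
  simp_rw [← hsubst, abs_sub_mul_add_div hγ]

/-- For fixed ℓ < r, viewing `S_L(ℓ,r) = ∫_{-∞}^{(ℓ+r)/2} f(x) g0(|ℓ−x|/γ) dx`
as a function of the loyalty parameter γ > 0, we have `S_L(ℓ,r) ∼ 2γ f(ℓ)` as γ → 0⁺, i.e.
`lim_{γ→0+} S_L(ℓ,r)/γ = 2 f(ℓ)`. -/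
theorem stmt_14
    (f : ℝ → ℝ)
    (hf_smooth : ContDiff ℝ 1 f)
    (hf_bdd : ∃ M, ∀ x, |f x| ≤ M)
    (hf'_bdd : ∃ M, ∀ x, |deriv f x| ≤ M)
    (hf_pos : ∀ x, 0 < f x)
    (hf_total : ∫ x, f x = 1)
    (hf_median : ∫ x in Iic (0 : ℝ), f x = 1 / 2)
    (g0 : ℝ → ℝ)
    (hg0_cont : ContinuousOn g0 (Ici 0))
    (hg0_pos : ∀ z ∈ Ici (0 : ℝ), 0 < g0 z)
    (hg0_le_one : ∀ z ∈ Ici (0 : ℝ), g0 z ≤ 1)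
    (hg0_anti : AntitoneOn g0 (Ici 0))
    (hg0_zero : g0 0 = 1)
    (hg0_decay : g0 =O[atTop] fun z => 1 / z ^ 2)
    (hg0_int : ∫ z in Ioi (0 : ℝ), g0 z = 1)
    (ℓ r : ℝ) (hℓr : ℓ < r) :
    Tendsto (fun γ : ℝ => (∫ x in Iic ((ℓ + r) / 2), f x * g0 (|ℓ - x| / γ)) / γ)
      (𝓝[>] 0) (𝓝 (2 * f ℓ)) :=
  stmt_14_general f hf_smooth hf_bdd g0 hg0_int ℓ r hℓr
end

section
/- Fix real numbers ℓ < r, and regard S_L(ℓ,r) as a function of the loyalty parameter γ > 0 through g(z) = g_0(z/γ). Then ∂S_L/∂ℓ(ℓ,r) ∼ 2γ f′(ℓ) as γ → 0+, i.e., lim_{γ→0+} (1/γ) ∂S_L/∂ℓ(ℓ,r) = 2 f′(ℓ). -/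
/-!
Substituting `y = l - x` turns the vote share into `∫_{y > (l - r)/2} f (l - y) g₀ (|y| / γ) dy`,
so `l` enters only through `f` and the lower limit. The Leibniz rule then gives, with
`s = (ℓ - r)/2 < 0`,
`∂S_L/∂ℓ = ∫_{y > s} f' (ℓ - y) g₀ (|y| / γ) dy - ½ f ((ℓ + r)/2) g₀ (|s| / γ)`.
After dividing by `γ` and rescaling `y = γ u`, the integral is `∫_{u > s/γ} f' (ℓ - γ u) g₀ (|u|) du`,
which tends to `f' ℓ ∫ g₀ (|u|) du = 2 f' ℓ` by dominated convergence, while the boundary term is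
`O(γ)` because `g₀ (z) = O(1 / z²)`.
-/

open MeasureTheory Set Filter Topology Asymptotics

theorem setIntegral_Iic_mul_comp_sub (F G : ℝ → ℝ) (l b : ℝ) :
    ∫ x in Iic b, F x * G (l - x) = ∫ y in Ioi (l - b), F (l - y) * G y := by
  rw [← integral_Ici_eq_integral_Ioi, ← integral_indicator measurableSet_Iic,
    ← integral_indicator measurableSet_Ici, ← integral_sub_left_eq_self _ volume l]
  congr 1 with y
  simp only [indicator, mem_Iic, mem_Ici, sub_sub_cancel, sub_le_comm]

section Leibniz

variable {k ψ : ℝ → ℝ} {M M' : ℝ}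

theorem integrable_comp_sub_mul {μ : Measure ℝ} (hk : Continuous k) (hkM : ∀ x, |k x| ≤ M)
    (hψ : Integrable ψ μ) (l : ℝ) : Integrable (fun y => k (l - y) * ψ y) μ :=
  hψ.bdd_mul (hk.comp (continuous_sub_left l)).aestronglyMeasurable
    (.of_forall fun _ => (Real.norm_eq_abs _).trans_le (hkM _))

theorem hasDerivAt_integral_comp_sub_mul {μ : Measure ℝ} (hk : Differentiable ℝ k)
    (hkM : ∀ x, |k x| ≤ M) (hk'M : ∀ x, |deriv k x| ≤ M') (hψ : Integrable ψ μ) (ℓ : ℝ) :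
    HasDerivAt (fun l => ∫ y, k (l - y) * ψ y ∂μ) (∫ y, deriv k (ℓ - y) * ψ y ∂μ) ℓ :=
  (hasDerivAt_integral_of_dominated_loc_of_deriv_le (F := fun l y => k (l - y) * ψ y)
    (F' := fun l y => deriv k (l - y) * ψ y) (bound := fun y => M' * ‖ψ y‖) univ_mem
    (.of_forall fun l => (integrable_comp_sub_mul hk.continuous hkM hψ l).aestronglyMeasurable)
    (integrable_comp_sub_mul hk.continuous hkM hψ ℓ)
    (((measurable_deriv k).comp (measurable_const.sub measurable_id)).aestronglyMeasurable.mul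
      hψ.aestronglyMeasurable)
    (.of_forall fun y l _ => by
      rw [norm_mul, Real.norm_eq_abs]
      exact mul_le_mul_of_nonneg_right (hk'M _) (norm_nonneg _))
    (hψ.norm.const_mul M')
    (.of_forall fun y l _ =>
      (((hk _).hasDerivAt.comp l ((hasDerivAt_id l).sub_const y)).mul_const (ψ y)).congr_deriv
        (by simp))).2

/- The integrand is `O(|l - ℓ|)` uniformly in `y` and the interval shrinks to a point, so the
integral is `o(l - ℓ)`. -/
theorem hasDerivAt_intervalIntegral_sub_comp_sub_mul {a : ℝ → ℝ} {ℓ : ℝ}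
    (hk : Differentiable ℝ k) (hk'M : ∀ x, |deriv k x| ≤ M') (hψ : Integrable ψ)
    (ha : ContinuousAt a ℓ) :
    HasDerivAt (fun l => ∫ y in a ℓ..a l, (k (l - y) - k (ℓ - y)) * ψ y) 0 ℓ := by
  have hlip : ∀ x y, |k x - k y| ≤ M' * |x - y| := fun x y => by
    simpa only [Real.norm_eq_abs] using convex_univ.norm_image_sub_le_of_norm_deriv_le
      (fun z _ => hk z) (fun z _ => (Real.norm_eq_abs _).trans_le (hk'M z)) (mem_univ y)
      (mem_univ x)
  set E : ℝ → ℝ := fun l => ∫ y in a ℓ..a l, ‖ψ y‖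
  have hE : Tendsto E (𝓝 ℓ) (𝓝 0) := by
    have := ((intervalIntegral.continuous_primitive (fun _ _ => hψ.norm.intervalIntegrable)
      (a ℓ)).continuousAt.comp ha).tendsto
    simpa [E, Function.comp_def] using this
  have hbound : ∀ l, ‖∫ y in a ℓ..a l, (k (l - y) - k (ℓ - y)) * ψ y‖ ≤ M' * ‖(l - ℓ) * E l‖ := by
    intro l
    have hM' : 0 ≤ M' := (abs_nonneg _).trans (hk'M 0)
    calc ‖∫ y in a ℓ..a l, (k (l - y) - k (ℓ - y)) * ψ y‖
        ≤ |∫ y in a ℓ..a l, M' * |l - ℓ| * ‖ψ y‖| := by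
          refine intervalIntegral.norm_integral_le_abs_of_norm_le (.of_forall fun y => ?_)
            (hψ.norm.const_mul _).intervalIntegrable
          rw [norm_mul, Real.norm_eq_abs]
          refine mul_le_mul_of_nonneg_right ((hlip _ _).trans_eq ?_) (norm_nonneg _)
          rw [sub_sub_sub_cancel_right]
      _ = M' * ‖(l - ℓ) * E l‖ := by
        rw [intervalIntegral.integral_const_mul, abs_mul, abs_mul, abs_of_nonneg hM', abs_abs,
          norm_mul, Real.norm_eq_abs, Real.norm_eq_abs, mul_assoc]
  rw [hasDerivAt_iff_isLittleO]
  have hsmall : (fun l => (l - ℓ) * E l) =o[𝓝 ℓ] fun l => l - ℓ := by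
    simpa using (isBigO_refl (fun l => l - ℓ) (𝓝 ℓ)).mul_isLittleO ((isLittleO_one_iff ℝ).2 hE)
  simpa using (IsBigO.of_bound M' (.of_forall hbound)).trans_isLittleO hsmall

theorem hasDerivAt_intervalIntegral_comp_sub_mul {a : ℝ → ℝ} {a' ℓ : ℝ}
    (hk : Differentiable ℝ k) (hkM : ∀ x, |k x| ≤ M) (hk'M : ∀ x, |deriv k x| ≤ M')
    (hψ : Integrable ψ) (hψa : ContinuousAt ψ (a ℓ)) (ha : HasDerivAt a a' ℓ) :
    HasDerivAt (fun l => ∫ y in a ℓ..a l, k (l - y) * ψ y) (k (ℓ - a ℓ) * ψ (a ℓ) * a') ℓ := by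
  have hint := integrable_comp_sub_mul hk.continuous hkM hψ
  have hFTC : HasDerivAt (fun l => ∫ y in a ℓ..a l, k (ℓ - y) * ψ y)
      (k (ℓ - a ℓ) * ψ (a ℓ) * a') ℓ :=
    (intervalIntegral.integral_hasDerivAt_right (hint ℓ).intervalIntegrable
      (hint ℓ).aestronglyMeasurable.stronglyMeasurableAtFilter
      ((hk.continuous.comp (continuous_sub_left ℓ)).continuousAt.mul hψa)).comp ℓ ha
  have hsplit : ∀ l, ∫ y in a ℓ..a l, k (l - y) * ψ y = (∫ y in a ℓ..a l, k (ℓ - y) * ψ y)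
      + ∫ y in a ℓ..a l, (k (l - y) - k (ℓ - y)) * ψ y := fun l => by
    rw [← intervalIntegral.integral_add (hint ℓ).intervalIntegrable
      ((hint l).sub (hint ℓ) |>.congr (.of_forall fun y => (sub_mul ..).symm)).intervalIntegrable]
    congr 1 with y
    ring
  simpa only [add_zero] using (hFTC.add (hasDerivAt_intervalIntegral_sub_comp_sub_mul hk hk'M hψ
    ha.continuousAt)).congr_of_eventuallyEq (.of_forall hsplit)

theorem hasDerivAt_setIntegral_Ioi_comp_sub_mul {a : ℝ → ℝ} {a' ℓ : ℝ}
    (hk : Differentiable ℝ k) (hkM : ∀ x, |k x| ≤ M) (hk'M : ∀ x, |deriv k x| ≤ M')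
    (hψ : Integrable ψ) (hψa : ContinuousAt ψ (a ℓ)) (ha : HasDerivAt a a' ℓ) :
    HasDerivAt (fun l => ∫ y in Ioi (a l), k (l - y) * ψ y)
      ((∫ y in Ioi (a ℓ), deriv k (ℓ - y) * ψ y) - k (ℓ - a ℓ) * ψ (a ℓ) * a') ℓ := by
  have hint := integrable_comp_sub_mul hk.continuous hkM hψ
  have hsplit : ∀ l, ∫ y in Ioi (a l), k (l - y) * ψ y
      = (∫ y in Ioi (a ℓ), k (l - y) * ψ y) - ∫ y in a ℓ..a l, k (l - y) * ψ y := fun l => by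
    rw [← intervalIntegral.integral_Ioi_sub_Ioi' (hint l).integrableOn (hint l).integrableOn]
    ring
  rw [funext hsplit]
  exact (hasDerivAt_integral_comp_sub_mul hk hkM hk'M hψ.integrableOn ℓ).sub
    (hasDerivAt_intervalIntegral_comp_sub_mul hk hkM hk'M hψ hψa ha)

theorem hasDerivAt_setIntegral_Iic_mul_comp_sub {ℓ r : ℝ} (hk : Differentiable ℝ k)
    (hkM : ∀ x, |k x| ≤ M) (hk'M : ∀ x, |deriv k x| ≤ M') (hψ : Integrable ψ)
    (hψc : ContinuousAt ψ ((ℓ - r) / 2)) :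
    HasDerivAt (fun l => ∫ x in Iic ((l + r) / 2), k x * ψ (l - x))
      ((∫ y in Ioi ((ℓ - r) / 2), deriv k (ℓ - y) * ψ y) - k ((ℓ + r) / 2) * ψ ((ℓ - r) / 2) / 2)
      ℓ := by
  have hlower : ∀ l : ℝ, l - (l + r) / 2 = (l - r) / 2 := fun l => by ring
  simp_rw [setIntegral_Iic_mul_comp_sub, hlower]
  have h := hasDerivAt_setIntegral_Ioi_comp_sub_mul (a := fun l => (l - r) / 2) hk hkM hk'M hψ hψc
    (((hasDerivAt_id ℓ).sub_const r).div_const 2)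
  rwa [show ℓ - (ℓ - r) / 2 = (ℓ + r) / 2 by ring, mul_one_div] at h

end Leibniz

theorem tendsto_inv_mul_setIntegral_Ioi_mul_comp_div {h κ : ℝ → ℝ} {s M : ℝ} (hs : s < 0)
    (hh : Continuous h) (hM : ∀ y, |h y| ≤ M) (hκ : Integrable κ) :
    Tendsto (fun γ => γ⁻¹ * ∫ y in Ioi s, h y * κ (y / γ)) (𝓝[>] 0)
      (𝓝 (h 0 * ∫ u, κ u)) := by
  have hrescale : ∀ γ : ℝ, 0 < γ → γ⁻¹ * ∫ y in Ioi s, h y * κ (y / γ)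
      = ∫ u, (Ioi (s / γ)).indicator (fun u => h (γ * u) * κ u) u := by
    intro γ hγ
    have key := integral_comp_mul_left_Ioi (fun y => h y * κ (y / γ)) (s / γ) hγ
    simp only [mul_div_cancel_left₀ _ hγ.ne', mul_div_cancel₀ _ hγ.ne', smul_eq_mul] at key
    rw [integral_indicator measurableSet_Ioi, key]
  have hlim : Tendsto (fun γ => ∫ u, (Ioi (s / γ)).indicator (fun u => h (γ * u) * κ u) u)
      (𝓝[>] 0) (𝓝 (∫ u, h 0 * κ u)) := by
    refine tendsto_integral_filter_of_dominated_convergence (fun u => M * ‖κ u‖)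
      (.of_forall fun γ => ?_) (.of_forall fun γ => .of_forall fun u => ?_)
      (hκ.norm.const_mul M) (.of_forall fun u => ?_)
    · exact ((hh.comp (continuous_const_mul γ)).aestronglyMeasurable.mul
        hκ.aestronglyMeasurable).indicator measurableSet_Ioi
    · calc ‖(Ioi (s / γ)).indicator (fun u => h (γ * u) * κ u) u‖
          ≤ ‖h (γ * u) * κ u‖ := norm_indicator_le_norm_self _ _
        _ ≤ M * ‖κ u‖ := by
          rw [norm_mul, Real.norm_eq_abs]
          exact mul_le_mul_of_nonneg_right (hM _) (norm_nonneg _)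
    · have hmem : ∀ᶠ γ in 𝓝[>] (0 : ℝ), u ∈ Ioi (s / γ) :=
        (tendsto_inv_nhdsGT_zero.const_mul_atTop_of_neg hs).eventually (eventually_lt_atBot u)
      have hcont : Tendsto (fun γ => h (γ * u) * κ u) (𝓝[>] 0) (𝓝 (h 0 * κ u)) := by
        have := (hh.comp (continuous_mul_const u)).tendsto 0
        simpa using (this.mono_left nhdsWithin_le_nhds).mul_const (κ u)
      refine hcont.congr' ?_
      filter_upwards [hmem] with γ hγ
      rw [indicator_of_mem hγ]
  rw [integral_const_mul] at hlim
  refine hlim.congr' ?_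
  filter_upwards [self_mem_nhdsWithin] with γ hγ
  exact (hrescale γ hγ).symm

theorem tendsto_div_of_isBigO_inv_sq {g : ℝ → ℝ} (hg : g =O[atTop] fun z => 1 / z ^ 2)
    {c : ℝ} (hc : 0 < c) : Tendsto (fun γ => g (c / γ) / γ) (𝓝[>] 0) (𝓝 0) := by
  have hcγ : Tendsto (fun γ => c / γ) (𝓝[>] 0) atTop :=
    tendsto_inv_nhdsGT_zero.const_mul_atTop hc
  have hO : (fun γ => g (c / γ) * γ⁻¹) =O[𝓝[>] 0] fun γ => 1 / (c / γ) ^ 2 * γ⁻¹ :=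
    (hg.comp_tendsto hcγ).mul (isBigO_refl _ _)
  refine hO.trans_tendsto ?_
  have hlin : Tendsto (fun γ : ℝ => γ / c ^ 2) (𝓝[>] 0) (𝓝 0) := by
    simpa using ((continuous_id.div_const (c ^ 2)).tendsto 0).mono_left nhdsWithin_le_nhds
  refine hlin.congr' ?_
  filter_upwards [self_mem_nhdsWithin] with γ (hγ : 0 < γ)
  field_simp

theorem stmt_17_general
    (f : ℝ → ℝ)
    (hf_smooth : ContDiff ℝ 1 f)
    (hf_bdd : ∃ M, ∀ x, |f x| ≤ M)
    (hf'_bdd : ∃ M, ∀ x, |deriv f x| ≤ M)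
    (g0 : ℝ → ℝ)
    (hg0_cont : ContinuousOn g0 (Ici 0))
    (hg0_decay : g0 =O[atTop] fun z => 1 / z ^ 2)
    (hg0_int : ∫ z in Ioi (0 : ℝ), g0 z = 1)
    (ℓ r : ℝ) (hℓr : ℓ < r) :
    Tendsto (fun γ : ℝ =>
        (deriv (fun l => ∫ x in Iic ((l + r) / 2), f x * g0 (|l - x| / γ)) ℓ) / γ)
      (𝓝[>] 0) (𝓝 (2 * deriv f ℓ)) := by
  obtain ⟨M, hM⟩ := hf_bdd
  obtain ⟨M', hM'⟩ := hf'_bdd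
  set κ : ℝ → ℝ := fun u => g0 |u|
  have hκ_total : ∫ u, κ u = 2 := by rw [integral_comp_abs, hg0_int, mul_one]
  have hκ : Integrable κ := .of_integral_ne_zero (by rw [hκ_total]; exact two_ne_zero)
  have hs : (ℓ - r) / 2 < 0 := by linarith
  have hderiv : ∀ γ : ℝ, 0 < γ →
      HasDerivAt (fun l => ∫ x in Iic ((l + r) / 2), f x * g0 (|l - x| / γ))
        ((∫ y in Ioi ((ℓ - r) / 2), deriv f (ℓ - y) * g0 (|y| / γ))
          - f ((ℓ + r) / 2) * g0 (|(ℓ - r) / 2| / γ) / 2) ℓ := fun γ hγ =>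
    hasDerivAt_setIntegral_Iic_mul_comp_sub (ψ := fun y => g0 (|y| / γ))
      (hf_smooth.differentiable one_ne_zero) hM hM'
      (by simpa only [κ, abs_div, abs_of_pos hγ] using hκ.comp_div hγ.ne')
      ((hg0_cont.continuousAt (Ici_mem_nhds (div_pos (abs_pos.2 hs.ne) hγ))).comp
        (f := fun y => |y| / γ) (by fun_prop))
  have hbulk := tendsto_inv_mul_setIntegral_Ioi_mul_comp_div hs
    ((hf_smooth.continuous_deriv le_rfl).comp (continuous_sub_left ℓ)) (fun y => hM' (ℓ - y)) hκ
  have hboundary := tendsto_div_of_isBigO_inv_sq hg0_decay (abs_pos.2 hs.ne)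
  have hlim := hbulk.sub (hboundary.const_mul (f ((ℓ + r) / 2) / 2))
  rw [show (deriv f ∘ (ℓ - ·)) 0 * (∫ u, κ u) - f ((ℓ + r) / 2) / 2 * 0 = 2 * deriv f ℓ by
    simp [hκ_total, mul_comm]] at hlim
  refine hlim.congr' ?_
  filter_upwards [self_mem_nhdsWithin] with γ (hγ : 0 < γ)
  rw [(hderiv γ hγ).deriv]
  simp only [κ, Function.comp_apply, abs_div, abs_of_pos hγ]
  ring

/-- For fixed ℓ < r, viewing `S_L(ℓ,r)` as a function of the loyalty parameter
γ > 0 through `g(z) = g0(z/γ)`, we have `∂S_L/∂ℓ(ℓ,r) ∼ 2γ f′(ℓ)` as γ → 0⁺, i.e.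
`lim_{γ→0+} (1/γ) ∂S_L/∂ℓ(ℓ,r) = 2 f′(ℓ)`. -/
theorem stmt_17
    (f : ℝ → ℝ)
    (hf_smooth : ContDiff ℝ 1 f)
    (hf_bdd : ∃ M, ∀ x, |f x| ≤ M)
    (hf'_bdd : ∃ M, ∀ x, |deriv f x| ≤ M)
    (hf_pos : ∀ x, 0 < f x)
    (hf_total : ∫ x, f x = 1)
    (hf_median : ∫ x in Iic (0 : ℝ), f x = 1 / 2)
    (g0 : ℝ → ℝ)
    (hg0_cont : ContinuousOn g0 (Ici 0))
    (hg0_pos : ∀ z ∈ Ici (0 : ℝ), 0 < g0 z)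
    (hg0_le_one : ∀ z ∈ Ici (0 : ℝ), g0 z ≤ 1)
    (hg0_anti : AntitoneOn g0 (Ici 0))
    (hg0_zero : g0 0 = 1)
    (hg0_decay : g0 =O[atTop] fun z => 1 / z ^ 2)
    (hg0_int : ∫ z in Ioi (0 : ℝ), g0 z = 1)
    (ℓ r : ℝ) (hℓr : ℓ < r) :
    Tendsto (fun γ : ℝ =>
        (deriv (fun l => ∫ x in Iic ((l + r) / 2), f x * g0 (|l - x| / γ)) ℓ) / γ)
      (𝓝[>] 0) (𝓝 (2 * deriv f ℓ)) :=
  stmt_17_general f hf_smooth hf_bdd hf'_bdd g0 hg0_cont hg0_decay hg0_int ℓ r hℓr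
end
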